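/- arXiv:2105.10318 — 11 statements merged into one kernel-verified Lean document; each statement's English description precedes it below -/
import Mathlib

section
/- Let v_1,…,v_m ∈ ℂ^n be fixed, and let Ã : H_n(ℂ) → ℝ^{⌊m/2⌋} be the associated map. Suppose there exist constants d, D > 0 and an integer r ∈ {1,…,n} with r > 4D²/d² + 2 such that d·‖X‖_F ≤ (1/m)·‖Ã(X)‖_{ℓ¹} ≤ D·‖X‖_F for all Hermitian X of rank at most r. Then, for every x^s ∈ ℂ^n, there is no nonzero Hermitian matrix H ∈ H_n(ℂ) satisfying simultaneously: Tr(H) ≤ 0, Ã(H) = 0, and x^s(x^s)^* + H ⪰ 0. -/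
open Matrix
open scoped ComplexOrder

/-- The measurement map `A(X)_k = ⟨v_k v_k^*, X⟩ = Tr(v_k v_k^* X)` (real-valued
on Hermitian matrices). -/
noncomputable def measA {n m : ℕ} (v : Fin m → Fin n → ℂ)
    (X : Matrix (Fin n) (Fin n) ℂ) (k : Fin m) : ℝ :=
  (Matrix.trace ((Matrix.of fun i j => v k i * (starRingEnd ℂ) (v k j)) * X)).re

/-- The map `Ã(X)_j = A(X)_{2j-1} - A(X)_{2j}` (0-indexed: entries `2j` and `2j+1`). -/
noncomputable def tildeA {n m : ℕ} (v : Fin m → Fin n → ℂ)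
    (X : Matrix (Fin n) (Fin n) ℂ) (j : Fin (m / 2)) : ℝ :=
  measA v X ⟨2 * j.val, by have := j.isLt; omega⟩ -
    measA v X ⟨2 * j.val + 1, by have := j.isLt; omega⟩

/-- Frobenius norm of a complex matrix. -/
noncomputable def frob {n : ℕ} (X : Matrix (Fin n) (Fin n) ℂ) : ℝ :=
  Real.sqrt (∑ i, ∑ j, ‖X i j‖ ^ 2)

/-- The rank-one Hermitian matrix `x x^*`. -/
noncomputable def outerC {n : ℕ} (x : Fin n → ℂ) : Matrix (Fin n) (Fin n) ℂ :=
  Matrix.of fun i j => x i * (starRingEnd ℂ) (x j)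

/-!
Write `H = U diag(λ) Uᴴ` with `λ` sorted decreasingly. As `x xᴴ + H ⪰ 0`, `H` has at most one
negative eigenvalue `λ₀`; one exists because `H ≠ 0` and `Tr H ≤ 0`, and `Tr H ≤ 0` also gives
`∑ λᵢ⁺ ≤ |λ₀|`.

Cut the positive eigenvalues into consecutive blocks of `s = r - 1`. Since the sequence is
decreasing, the `ℓ²` norm of a block is at most `1/√s` times the `ℓ¹` norm of the previous one.
Let `H₀` carry the first block together with `λ₀`, and `Hⱼ` the `j`-th block (`j ≥ 1`); all have
rank at most `r`, and `Ã H = 0` gives `Ã H₀ = -∑ Ã Hⱼ`. The two sides of the RIP then give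
`d |λ₀| ≤ d ‖H₀‖_F ≤ D ∑ ‖Hⱼ‖_F ≤ (D/√s) ∑ λᵢ⁺ ≤ (D/√s) |λ₀|`, i.e. `d² (r - 1) ≤ D²`,
contradicting `r > 4D²/d² + 2`.
-/

open Finset

namespace Matrix

variable {ι : Type*} [Fintype ι] [DecidableEq ι]

noncomputable def conjDiag (U : Matrix ι ι ℂ) : (ι → ℝ) →+ Matrix ι ι ℂ where
  toFun f := U * diagonal (fun i => (f i : ℂ)) * Uᴴ
  map_zero' := by simp
  map_add' f g := by simp [← diagonal_add, Matrix.mul_add, Matrix.add_mul]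

lemma conjDiag_apply (U : Matrix ι ι ℂ) (f : ι → ℝ) :
    conjDiag U f = U * diagonal (fun i => (f i : ℂ)) * Uᴴ := rfl

lemma isHermitian_conjDiag (U : Matrix ι ι ℂ) (f : ι → ℝ) : (conjDiag U f).IsHermitian :=
  isHermitian_mul_mul_conjTranspose U (isHermitian_diagonal_of_self_adjoint _
    (funext fun i => Complex.conj_ofReal (f i)))

lemma rank_conjDiag_le (U : Matrix ι ι ℂ) (f : ι → ℝ) :
    (conjDiag U f).rank ≤ #{i | f i ≠ 0} := by
  classical
  calc (conjDiag U f).rank ≤ (diagonal fun i => (f i : ℂ)).rank :=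
        (rank_mul_le_left _ _).trans (rank_mul_le_right _ _)
    _ = #{i | f i ≠ 0} := by
        rw [rank_diagonal, Fintype.card_subtype]
        simp

variable {U : Matrix ι ι ℂ}

lemma trace_conjDiag (hU : Uᴴ * U = 1) (f : ι → ℝ) :
    (conjDiag U f).trace = ∑ i, (f i : ℂ) := by
  rw [conjDiag_apply, trace_mul_comm, ← Matrix.mul_assoc, hU, Matrix.one_mul, trace_diagonal]

lemma conjTranspose_conjDiag_mul_conjDiag (hU : Uᴴ * U = 1) (f g : ι → ℝ) :
    (conjDiag U f)ᴴ * conjDiag U g = conjDiag U (f * g) := by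
  rw [(isHermitian_conjDiag U f).eq]
  simp only [conjDiag_apply, Matrix.mul_assoc]
  rw [← Matrix.mul_assoc Uᴴ, hU, Matrix.one_mul, ← Matrix.mul_assoc (diagonal _),
    diagonal_mul_diagonal]
  simp

lemma conjTranspose_mul_conjDiag_mul (hU : Uᴴ * U = 1) (f : ι → ℝ) :
    Uᴴ * conjDiag U f * U = diagonal (fun i => (f i : ℂ)) := by
  rw [conjDiag_apply, ← Matrix.mul_assoc, ← Matrix.mul_assoc, hU, Matrix.one_mul,
    Matrix.mul_assoc, hU, Matrix.mul_one]

omit [DecidableEq ι] in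
lemma re_trace_conjTranspose_mul_self (X : Matrix ι ι ℂ) :
    (Xᴴ * X).trace.re = ∑ i, ∑ j, ‖X i j‖ ^ 2 := by
  simp only [trace, diag_apply, mul_apply, conjTranspose_apply, Complex.re_sum]
  rw [Finset.sum_comm]
  refine Finset.sum_congr rfl fun i _ => Finset.sum_congr rfl fun j _ => ?_
  rw [Complex.star_def, ← Complex.normSq_eq_conj_mul_self, Complex.ofReal_re,
    Complex.normSq_eq_norm_sq]

lemma star_dotProduct_mulVec_vecMulVec_add_diagonal (y c : ι → ℂ) (f : ι → ℝ) :
    star c ⬝ᵥ ((vecMulVec y (star y) + diagonal fun i => (f i : ℂ)) *ᵥ c) =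
      ((Complex.normSq (star y ⬝ᵥ c) + ∑ i, f i * Complex.normSq (c i) : ℝ) : ℂ) := by
  rw [add_mulVec, dotProduct_add, vecMulVec_mulVec]
  simp only [dotProduct, Pi.star_apply, mulVec_diagonal, Pi.smul_apply,
    MulOpposite.smul_eq_mul_unop, MulOpposite.unop_op]
  push_cast
  congr 1
  · rw [Complex.normSq_eq_conj_mul_self, ← Complex.star_def, star_sum, Finset.sum_mul]
    refine Finset.sum_congr rfl fun x _ => ?_
    simp only [star_mul', star_star]
    ring
  · refine Finset.sum_congr rfl fun x _ => ?_
    rw [Complex.normSq_eq_conj_mul_self, ← Complex.star_def]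
    ring

lemma card_neg_le_one_of_posSemidef_add_diagonal {y : ι → ℂ} {f : ι → ℝ}
    (h : (vecMulVec y (star y) + diagonal fun i => (f i : ℂ)).PosSemidef) :
    #{i | f i < 0} ≤ 1 := by
  rw [Finset.card_le_one]
  intro i hi j hj
  simp only [Finset.mem_filter, Finset.mem_univ, true_and] at hi hj
  by_contra hij
  -- `c = a eᵢ + b eⱼ ≠ 0` with `yᴴ c = 0` would make the quadratic form negative
  obtain ⟨a, b, hab, horth⟩ :
      ∃ a b : ℂ, (a ≠ 0 ∨ b ≠ 0) ∧ star (y i) * a + star (y j) * b = 0 := by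
    by_cases hy : y i = 0
    · exact ⟨1, 0, Or.inl one_ne_zero, by simp [hy]⟩
    · exact ⟨star (y j), -star (y i), Or.inr (by simpa using hy), by ring⟩
  set c : ι → ℂ := Pi.single i a + Pi.single j b
  have hc : star y ⬝ᵥ c = 0 := by
    simpa [c, dotProduct_add] using horth
  have hsum : ∑ k, f k * Complex.normSq (c k) =
      f i * Complex.normSq a + f j * Complex.normSq b := by
    rw [Fintype.sum_eq_add i j hij]
    · simp [c, hij, Ne.symm hij]
    · intro k hk
      simp [c, hk.1, hk.2]
  have hq := h.dotProduct_mulVec_nonneg c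
  rw [star_dotProduct_mulVec_vecMulVec_add_diagonal, hc, hsum, Complex.zero_le_real, map_zero,
    zero_add] at hq
  rcases hab with ha | hb
  · nlinarith [Complex.normSq_pos.mpr ha, Complex.normSq_nonneg b]
  · nlinarith [Complex.normSq_pos.mpr hb, Complex.normSq_nonneg a]

lemma card_neg_le_one_of_posSemidef_add_conjDiag {U : Matrix ι ι ℂ} (hU : Uᴴ * U = 1)
    {x : ι → ℂ} {f : ι → ℝ} (h : (vecMulVec x (star x) + conjDiag U f).PosSemidef) :
    #{i | f i < 0} ≤ 1 := by
  apply card_neg_le_one_of_posSemidef_add_diagonal (y := Uᴴ *ᵥ x)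
  have h' := h.conjTranspose_mul_mul_same U
  rwa [Matrix.mul_add, Matrix.add_mul, conjTranspose_mul_conjDiag_mul hU, mul_vecMulVec,
    vecMulVec_mul, show star x ᵥ* U = star (Uᴴ *ᵥ x) by
      rw [star_mulVec, conjTranspose_conjTranspose]] at h'

lemma IsHermitian.exists_conjDiag_antitone {n : ℕ} {H : Matrix (Fin n) (Fin n) ℂ}
    (hH : H.IsHermitian) :
    ∃ U : Matrix (Fin n) (Fin n) ℂ, Uᴴ * U = 1 ∧
      ∃ f : Fin n → ℝ, Antitone f ∧ H = conjDiag U f := by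
  set U₀ : Matrix (Fin n) (Fin n) ℂ := (hH.eigenvectorUnitary : Matrix (Fin n) (Fin n) ℂ)
  set σ := Tuple.sort fun i => -hH.eigenvalues i
  have hU₀ : U₀ᴴ * U₀ = 1 := Matrix.mem_unitaryGroup_iff'.mp hH.eigenvectorUnitary.2
  refine ⟨U₀.submatrix id σ, ?_, hH.eigenvalues ∘ σ, ?_, ?_⟩
  · rw [conjTranspose_submatrix, ← submatrix_mul _ _ _ _ _ Function.bijective_id, hU₀,
      submatrix_one_equiv]
  · intro a b hab
    simpa using Tuple.monotone_sort (fun i => -hH.eigenvalues i) hab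
  · conv_lhs => rw [hH.spectral_theorem]
    have hD : (diagonal fun i => ((hH.eigenvalues ∘ σ) i : ℂ)) =
        (diagonal (RCLike.ofReal ∘ hH.eigenvalues)).submatrix σ σ := by
      rw [submatrix_diagonal_equiv]; rfl
    rw [conjDiag_apply, conjTranspose_submatrix, hD, submatrix_mul_equiv, submatrix_mul_equiv,
      submatrix_id_id, Unitary.conjStarAlgAut_apply, star_eq_conjTranspose]

end Matrix

lemma Nat.mem_Ico_of_div_eq {k s j : ℕ} (hs : 0 < s) (h : k / s = j) :
    k ∈ Ico (j * s) (j * s + s) := by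
  subst h
  exact Finset.mem_Ico.mpr ⟨Nat.div_mul_le_self k s, Nat.lt_div_mul_add hs⟩

lemma Finset.sum_range_mul_eq_sum_sum_Ico {M : Type*} [AddCommMonoid M] (g : ℕ → M) (s J : ℕ) :
    ∑ k ∈ range (J * s), g k = ∑ j ∈ range J, ∑ k ∈ Ico (j * s) (j * s + s), g k := by
  induction J with
  | zero => simp
  | succ J ih =>
    rw [sum_range_succ, ← ih, add_mul, one_mul, sum_range_add_sum_Ico _ (Nat.le_add_right _ _)]

section Shifting

variable {ν : ℕ → ℝ} {s : ℕ}

lemma sqrt_sum_sq_Ico_le (hν : Antitone ν) (hν0 : 0 ≤ ν) (hs : 0 < s) (j : ℕ) :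
    √(∑ k ∈ Ico ((j + 1) * s) ((j + 1) * s + s), ν k ^ 2) ≤
      (∑ k ∈ Ico (j * s) (j * s + s), ν k) / √s := by
  set a := ν ((j + 1) * s)
  have hs' : (0 : ℝ) < s := Nat.cast_pos.mpr hs
  have hsq : ∑ k ∈ Ico ((j + 1) * s) ((j + 1) * s + s), ν k ^ 2 ≤ s * a ^ 2 := by
    have := Finset.sum_le_card_nsmul (Ico ((j + 1) * s) ((j + 1) * s + s)) (fun k => ν k ^ 2)
      (a ^ 2) fun k hk => pow_le_pow_left₀ (hν0 k) (hν (Finset.mem_Ico.mp hk).1) 2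
    simpa using this
  have hlin : s * a ≤ ∑ k ∈ Ico (j * s) (j * s + s), ν k := by
    have := Finset.card_nsmul_le_sum (Ico (j * s) (j * s + s)) ν a fun k hk =>
      hν (by have := (Finset.mem_Ico.mp hk).2; linarith [add_one_mul j s])
    simpa using this
  calc √(∑ k ∈ Ico ((j + 1) * s) ((j + 1) * s + s), ν k ^ 2)
      ≤ √(s * a ^ 2) := Real.sqrt_le_sqrt hsq
    _ = s * a / √s := by
      rw [Real.sqrt_mul hs'.le, Real.sqrt_sq (hν0 _), eq_div_iff (Real.sqrt_pos.mpr hs').ne',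
        mul_right_comm, Real.mul_self_sqrt hs'.le]
    _ ≤ _ := div_le_div_of_nonneg_right hlin (Real.sqrt_nonneg _)

lemma sum_sqrt_sum_sq_Ico_le (hν : Antitone ν) (hν0 : 0 ≤ ν) (hs : 0 < s) (J : ℕ) :
    ∑ j ∈ Ico 1 J, √(∑ k ∈ Ico (j * s) (j * s + s), ν k ^ 2) ≤
      (∑ k ∈ range (J * s), ν k) / √s := by
  rw [Finset.sum_Ico_eq_sum_range]
  calc ∑ j ∈ range (J - 1), √(∑ k ∈ Ico ((1 + j) * s) ((1 + j) * s + s), ν k ^ 2)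
      ≤ ∑ j ∈ range (J - 1), (∑ k ∈ Ico (j * s) (j * s + s), ν k) / √s :=
        Finset.sum_le_sum fun j _ => by
          rw [add_comm 1 j]
          exact sqrt_sum_sq_Ico_le hν hν0 hs j
    _ = (∑ k ∈ range ((J - 1) * s), ν k) / √s := by
        rw [Finset.sum_range_mul_eq_sum_sum_Ico, Finset.sum_div]
    _ ≤ (∑ k ∈ range (J * s), ν k) / √s := by
        gcongr
        · exact fun k _ _ => hν0 k
        · exact Nat.sub_le J 1

end Shifting

section Decomposition

variable {n : ℕ}

def extendByZero {α : Type*} [Zero α] (g : Fin n → α) (k : ℕ) : α :=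
  if h : k < n then g ⟨k, h⟩ else 0

lemma extendByZero_coe {α : Type*} [Zero α] (g : Fin n → α) (i : Fin n) :
    extendByZero g i = g i := by
  simp [extendByZero]

lemma extendByZero_nonneg {g : Fin n → ℝ} (hg : 0 ≤ g) : 0 ≤ extendByZero g := fun k => by
  unfold extendByZero
  split_ifs
  exacts [hg _, le_rfl]

lemma antitone_extendByZero {g : Fin n → ℝ} (hg : Antitone g) (hg0 : 0 ≤ g) :
    Antitone (extendByZero g) := by
  intro a b hab
  by_cases hb : b < n
  · simpa [extendByZero, hb, hab.trans_lt hb] using hg (Fin.mk_le_mk.mpr hab)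
  · simpa [extendByZero, hb] using extendByZero_nonneg hg0 a

lemma sum_range_extendByZero {M : Type*} [AddCommMonoid M] (g : Fin n → M) {N : ℕ} (hN : n ≤ N) :
    ∑ k ∈ range N, extendByZero g k = ∑ i, g i := by
  rw [← sum_range_add_sum_Ico _ hN, Finset.sum_eq_zero (s := Ico n N), add_zero,
    ← Fin.sum_univ_eq_sum_range]
  · simp [extendByZero_coe]
  · intro k hk
    simp [extendByZero, (Finset.mem_Ico.mp hk).1]

def blockPart (g : Fin n → ℝ) (s j : ℕ) (i : Fin n) : ℝ := if (i : ℕ) / s = j then g i else 0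

def headPart (f : Fin n → ℝ) (s : ℕ) (i : Fin n) : ℝ := if (i : ℕ) < s then f i else min (f i) 0

lemma headPart_add_sum_blockPart (f : Fin n → ℝ) {s : ℕ} (hs : 0 < s) :
    headPart f s + ∑ j ∈ Ico 1 n, blockPart (fun i => max (f i) 0) s j = f := by
  ext i
  simp only [Pi.add_apply, Finset.sum_apply, blockPart, headPart, Finset.sum_ite_eq,
    Finset.mem_Ico, Nat.one_le_div_iff hs]
  have hi : (i : ℕ) / s < n := (Nat.div_le_self _ _).trans_lt i.isLt
  by_cases his : (i : ℕ) < s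
  · simp [his, not_le.mpr his]
  · simp [his, not_lt.mp his, hi, min_add_max]

lemma card_blockPart_ne_zero_le (g : Fin n → ℝ) {s : ℕ} (hs : 0 < s) (j : ℕ) :
    #{i | blockPart g s j i ≠ 0} ≤ s := by
  calc #{i | blockPart g s j i ≠ 0} ≤ #(Ico (j * s) (j * s + s)) := by
        refine Finset.card_le_card_of_injOn (fun i => (i : ℕ)) (fun i hi => ?_)
          Fin.val_injective.injOn
        simp only [Finset.coe_filter, Finset.mem_univ, true_and, Set.mem_ofPred_eq, blockPart,
          ne_eq, ite_eq_right_iff, not_forall] at hi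
        exact Nat.mem_Ico_of_div_eq hs hi.1
    _ = s := by simp

lemma sum_blockPart_sq_le {g : Fin n → ℝ} {s : ℕ} (hs : 0 < s) (j : ℕ) :
    ∑ i, blockPart g s j i ^ 2 ≤ ∑ k ∈ Ico (j * s) (j * s + s), extendByZero g k ^ 2 := by
  calc ∑ i, blockPart g s j i ^ 2
      = ∑ k ∈ range n, if k / s = j then extendByZero g k ^ 2 else 0 := by
        rw [← Fin.sum_univ_eq_sum_range]
        simp [blockPart, extendByZero_coe, ite_pow]
    _ = ∑ k ∈ range n with k / s = j, extendByZero g k ^ 2 := (Finset.sum_filter _ _).symm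
    _ ≤ ∑ k ∈ Ico (j * s) (j * s + s), extendByZero g k ^ 2 :=
        Finset.sum_le_sum_of_subset_of_nonneg
          (fun k hk => Nat.mem_Ico_of_div_eq hs (Finset.mem_filter.mp hk).2)
          fun k _ _ => sq_nonneg _

lemma card_headPart_ne_zero_le (f : Fin n → ℝ) (s : ℕ) :
    #{i | headPart f s i ≠ 0} ≤ s + #{i | f i < 0} := by
  calc #{i | headPart f s i ≠ 0}
      ≤ #(({i | (i : ℕ) < s} : Finset (Fin n)) ∪ ({i | f i < 0} : Finset (Fin n))) := by
        refine Finset.card_le_card fun i hi => ?_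
        simp only [Finset.mem_filter, Finset.mem_univ, true_and, Finset.mem_union] at hi ⊢
        by_cases h : (i : ℕ) < s
        · exact Or.inl h
        · rw [headPart, if_neg h] at hi
          exact Or.inr (lt_of_not_ge fun h' => hi (min_eq_right h'))
    _ ≤ #{i : Fin n | (i : ℕ) < s} + #{i | f i < 0} := Finset.card_union_le _ _
    _ ≤ s + #{i | f i < 0} := by
        gcongr
        calc #{i : Fin n | (i : ℕ) < s} ≤ #(range s) :=
              Finset.card_le_card_of_injOn (fun i => (i : ℕ)) (fun i hi => by simpa using hi)
                Fin.val_injective.injOn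
          _ = s := Finset.card_range s

end Decomposition

lemma frob_conjDiag {n : ℕ} {U : Matrix (Fin n) (Fin n) ℂ} (hU : Uᴴ * U = 1) (f : Fin n → ℝ) :
    frob (conjDiag U f) = √(∑ i, f i ^ 2) := by
  rw [frob, ← re_trace_conjTranspose_mul_self, conjTranspose_conjDiag_mul_conjDiag hU,
    trace_conjDiag hU, Complex.re_sum]
  simp [sq]

noncomputable def tildeAAddHom {n m : ℕ} (v : Fin m → Fin n → ℂ) :
    Matrix (Fin n) (Fin n) ℂ →+ (Fin (m / 2) → ℝ) where
  toFun := tildeA v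
  map_zero' := by ext j; simp [tildeA, measA]
  map_add' X Y := by
    ext j
    simp only [tildeA, measA, Matrix.mul_add, trace_add, Complex.add_re, Pi.add_apply]
    ring

section Eigenvalues

variable {n : ℕ} {f : Fin n → ℝ}

lemma neg_le_frob_conjDiag_headPart {U : Matrix (Fin n) (Fin n) ℂ} (hU : Uᴴ * U = 1) (s : ℕ)
    {i₀ : Fin n} (hi₀ : f i₀ ≤ 0) : -f i₀ ≤ frob (conjDiag U (headPart f s)) := by
  have hhead : headPart f s i₀ = f i₀ := by
    unfold headPart; split_ifs <;> simp [hi₀]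
  rw [frob_conjDiag hU, ← Real.sqrt_sq (neg_nonneg.mpr hi₀), neg_sq, ← hhead]
  exact Real.sqrt_le_sqrt (Finset.single_le_sum (fun i _ => sq_nonneg (headPart f s i))
    (Finset.mem_univ i₀))

lemma sum_max_zero_le_of_card_neg_le_one (hneg : #{i | f i < 0} ≤ 1) {i₀ : Fin n}
    (hi₀ : f i₀ < 0) (htrace : ∑ i, f i ≤ 0) : ∑ i, max (f i) 0 ≤ -f i₀ := by
  have hmin : ∑ i, min (f i) 0 = f i₀ := by
    rw [Finset.sum_eq_single i₀ (fun i _ hi => min_eq_right (not_lt.mp fun h =>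
      hi (Finset.card_le_one.mp hneg i (by simpa using h) i₀ (by simpa using hi₀))))
      (by simp), min_eq_left hi₀.le]
  have hsplit : ∑ i, min (f i) 0 + ∑ i, max (f i) 0 = ∑ i, f i := by
    rw [← Finset.sum_add_distrib]
    simp [min_add_max]
  linarith

end Eigenvalues

lemma frob_conjDiag_headPart_le {n m : ℕ} {v : Fin m → Fin n → ℂ} {d D : ℝ} {r s : ℕ}
    (hD : 0 ≤ D)
    (hRIP : ∀ X : Matrix (Fin n) (Fin n) ℂ, X.IsHermitian → X.rank ≤ r →
      d * frob X ≤ (1 / m) * ∑ j, |tildeA v X j| ∧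
      (1 / m) * ∑ j, |tildeA v X j| ≤ D * frob X)
    {U : Matrix (Fin n) (Fin n) ℂ} (hU : Uᴴ * U = 1) {f : Fin n → ℝ} (hf : Antitone f)
    (hneg : #{i | f i < 0} ≤ 1) (hA : ∀ j, tildeA v (conjDiag U f) j = 0)
    (hs : 0 < s) (hsr : s + 1 ≤ r) :
    d * frob (conjDiag U (headPart f s)) ≤ D / √s * ∑ i, max (f i) 0 := by
  set g : Fin n → ℝ := fun i => max (f i) 0
  have hg : Antitone g := fun a b h => max_le_max (hf h) le_rfl
  have hg0 : 0 ≤ g := fun i => le_max_right _ _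
  set Φ := (tildeAAddHom v).comp (conjDiag U)
  have hΦ : Φ (headPart f s) = -∑ j ∈ Ico 1 n, Φ (blockPart g s j) := by
    rw [eq_neg_iff_add_eq_zero, ← map_sum, ← map_add, headPart_add_sum_blockPart f hs]
    exact funext hA
  have hhead := hRIP _ (isHermitian_conjDiag U _) <| (rank_conjDiag_le U _).trans <|
    (card_headPart_ne_zero_le f s).trans (by omega)
  have hblock (j : ℕ) : (1 / m : ℝ) * ∑ c, |Φ (blockPart g s j) c| ≤
      D * √(∑ k ∈ Ico (j * s) (j * s + s), extendByZero g k ^ 2) := by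
    refine (hRIP _ (isHermitian_conjDiag U _) <| (rank_conjDiag_le U _).trans <|
      (card_blockPart_ne_zero_le g hs j).trans (by omega)).2.trans ?_
    rw [frob_conjDiag hU]
    gcongr
    exact sum_blockPart_sq_le hs j
  calc d * frob (conjDiag U (headPart f s))
      ≤ (1 / m : ℝ) * ∑ c, |Φ (headPart f s) c| := hhead.1
    _ ≤ ∑ j ∈ Ico 1 n, (1 / m : ℝ) * ∑ c, |Φ (blockPart g s j) c| := by
        rw [hΦ, ← Finset.mul_sum, Finset.sum_comm]
        gcongr
        simp only [Pi.neg_apply, abs_neg, Finset.sum_apply]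
        exact Finset.abs_sum_le_sum_abs _ _
    _ ≤ ∑ j ∈ Ico 1 n, D * √(∑ k ∈ Ico (j * s) (j * s + s), extendByZero g k ^ 2) :=
        Finset.sum_le_sum fun j _ => hblock j
    _ ≤ D * ((∑ k ∈ range (n * s), extendByZero g k) / √s) := by
        rw [← Finset.mul_sum]
        gcongr
        exact sum_sqrt_sum_sq_Ico_le (antitone_extendByZero hg hg0) (extendByZero_nonneg hg0)
          hs n
    _ = D / √s * ∑ i, g i := by
        rw [sum_range_extendByZero g (Nat.le_mul_of_pos_right n hs)]
        ring

lemma div_sqrt_lt {d D s : ℝ} (hd : 0 < d) (hD : 0 ≤ D) (hs : D ^ 2 / d ^ 2 < s) :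
    D / √s < d := by
  have hs0 : 0 < s := (div_nonneg (sq_nonneg D) (sq_nonneg d)).trans_lt hs
  rw [div_lt_iff₀ (Real.sqrt_pos.mpr hs0), ← Real.sqrt_sq hd.le, ← Real.sqrt_mul (sq_nonneg d),
    Real.lt_sqrt hD]
  rwa [div_lt_iff₀ (by positivity), mul_comm] at hs

theorem no_bad_perturbation_general (n m : ℕ) (v : Fin m → Fin n → ℂ) (d D : ℝ) (r : ℕ)
    (hd : 0 < d) (hD : 0 < D)
    (hr : (r : ℝ) > 4 * D ^ 2 / d ^ 2 + 2)
    (hRIP : ∀ X : Matrix (Fin n) (Fin n) ℂ, X.IsHermitian → X.rank ≤ r →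
      d * frob X ≤ (1 / m) * ∑ j, |tildeA v X j| ∧
      (1 / m) * ∑ j, |tildeA v X j| ≤ D * frob X) :
    ∀ (xs : Fin n → ℂ) (H : Matrix (Fin n) (Fin n) ℂ), H.IsHermitian → H ≠ 0 →
      ¬((Matrix.trace H).re ≤ 0 ∧ (∀ j, tildeA v H j = 0) ∧
        (outerC xs + H).PosSemidef) := by
  rintro xs H hH hH0 ⟨htr, hA, hpsd⟩
  obtain ⟨U, hU, f, hf, rfl⟩ := hH.exists_conjDiag_antitone
  have hneg : #{i | f i < 0} ≤ 1 := card_neg_le_one_of_posSemidef_add_conjDiag hU hpsd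
  have htrace : ∑ i, f i ≤ 0 := by simpa [trace_conjDiag hU] using htr
  obtain ⟨i₀, hi₀⟩ : ∃ i₀, f i₀ < 0 := by
    by_contra! hf0
    apply hH0
    rw [(Fintype.sum_eq_zero_iff_of_nonneg hf0).mp (htrace.antisymm (sum_nonneg fun i _ => hf0 i)),
      map_zero]
  rw [mul_div_assoc] at hr
  have hDd : 0 ≤ D ^ 2 / d ^ 2 := by positivity
  have hr3 : 3 ≤ r := by exact_mod_cast (show (2 : ℝ) < r by linarith)
  set s := r - 1
  have hratio : D / √s < d := div_sqrt_lt hd hD.le <| by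
    rw [Nat.cast_sub (by omega), Nat.cast_one]
    linarith
  have hchain : d * -f i₀ ≤ D / √s * -f i₀ :=
    calc d * -f i₀ ≤ d * frob (conjDiag U (headPart f s)) :=
          mul_le_mul_of_nonneg_left (neg_le_frob_conjDiag_headPart hU s hi₀.le) hd.le
      _ ≤ D / √s * ∑ i, max (f i) 0 :=
          frob_conjDiag_headPart_le hD.le hRIP hU hf hneg hA (by omega) (by omega)
      _ ≤ D / √s * -f i₀ := by
          gcongr
          exact sum_max_zero_le_of_card_neg_le_one hneg hi₀ htrace
  nlinarith [mul_lt_mul_of_pos_right hratio (neg_pos.mpr hi₀)]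

/-- if `Ã` satisfies the ℓ¹/Frobenius RIP at rank `r > 4D²/d² + 2`,
then for every `x^s` there is no nonzero Hermitian `H` with `Tr H ≤ 0`,
`Ã(H) = 0` and `x^s (x^s)^* + H ⪰ 0`. -/
theorem no_bad_perturbation (n m : ℕ) (v : Fin m → Fin n → ℂ) (d D : ℝ) (r : ℕ)
    (hd : 0 < d) (hD : 0 < D) (hr1 : 1 ≤ r) (hrn : r ≤ n)
    (hr : (r : ℝ) > 4 * D ^ 2 / d ^ 2 + 2)
    (hRIP : ∀ X : Matrix (Fin n) (Fin n) ℂ, X.IsHermitian → X.rank ≤ r →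
      d * frob X ≤ (1 / m) * ∑ j, |tildeA v X j| ∧
      (1 / m) * ∑ j, |tildeA v X j| ≤ D * frob X) :
    ∀ (xs : Fin n → ℂ) (H : Matrix (Fin n) (Fin n) ℂ), H.IsHermitian → H ≠ 0 →
      ¬((Matrix.trace H).re ≤ 0 ∧ (∀ j, tildeA v H j = 0) ∧
        (outerC xs + H).PosSemidef) :=
  no_bad_perturbation_general n m v d D r hd hD hr hRIP
end

section
/- Let x, x^s, g ∈ ℂ^n, let α, β > 0 and 0 < μ ≤ α/β². If Re⟨x − x^s, g⟩ ≥ α·‖x − x^s‖² and ‖g‖ ≤ β·‖x − x^s‖, then ‖x^s − (x − μ·g)‖² ≤ (1 − μα)·‖x − x^s‖². -/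
/-!
Expanding the square, `‖xs - (x - μ g)‖² = ‖x - xs‖² - 2μ Re⟨x - xs, g⟩ + μ²‖g‖²`.
The correlation condition makes the middle term at most `-2μα‖x - xs‖²`, while the smoothness
condition and `μβ² ≤ α` make the last term at most `μα‖x - xs‖²`.
-/

open RCLike

theorem norm_sub_sub_real_smul_sq {𝕜 E : Type*} [RCLike 𝕜] [SeminormedAddCommGroup E]
    [InnerProductSpace 𝕜 E] (x xs g : E) (μ : ℝ) :
    ‖xs - (x - (μ : 𝕜) • g)‖ ^ 2
      = ‖x - xs‖ ^ 2 - 2 * μ * re (inner 𝕜 (x - xs) g) + μ ^ 2 * ‖g‖ ^ 2 := by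
  rw [norm_sub_rev, sub_right_comm, norm_sub_sq (𝕜 := 𝕜), inner_smul_real_right, norm_smul,
    norm_algebraMap', Real.norm_eq_abs, mul_pow, sq_abs, real_smul_eq_coe_mul, re_ofReal_mul]
  ring

theorem contraction_of_bounds {d a c α β μ : ℝ} (hβ : 0 < β) (hμ0 : 0 ≤ μ) (hμ : μ ≤ α / β ^ 2)
    (hd : 0 ≤ d) (ha : α * d ≤ a) (hc : c ≤ β ^ 2 * d) :
    d - 2 * μ * a + μ ^ 2 * c ≤ (1 - μ * α) * d := by
  have hμβ : μ * β ^ 2 ≤ α := (le_div_iff₀ (by positivity)).mp hμ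
  have hcorr : μ * (α * d) ≤ μ * a := mul_le_mul_of_nonneg_left ha hμ0
  have hsmooth : μ ^ 2 * c ≤ μ * α * d :=
    calc μ ^ 2 * c ≤ μ ^ 2 * (β ^ 2 * d) := mul_le_mul_of_nonneg_left hc (sq_nonneg μ)
      _ = (μ * β ^ 2) * (μ * d) := by ring
      _ ≤ α * (μ * d) := mul_le_mul_of_nonneg_right hμβ (mul_nonneg hμ0 hd)
      _ = μ * α * d := by ring
  linarith

theorem contraction_step_general (n : ℕ) (x xs g : EuclideanSpace ℂ (Fin n)) (α β μ : ℝ)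
    (hβ : 0 < β) (hμ0 : 0 < μ) (hμ : μ ≤ α / β ^ 2)
    (h1 : α * ‖x - xs‖ ^ 2 ≤ (inner ℂ (x - xs) g : ℂ).re)
    (h2 : ‖g‖ ≤ β * ‖x - xs‖) :
    ‖xs - (x - μ • g)‖ ^ 2 ≤ (1 - μ * α) * ‖x - xs‖ ^ 2 := by
  have hg : ‖g‖ ^ 2 ≤ β ^ 2 * ‖x - xs‖ ^ 2 := by
    rw [← mul_pow]
    exact pow_le_pow_left₀ (norm_nonneg g) h2 2
  rw [real_smul_eq_coe_smul (K := ℂ), norm_sub_sub_real_smul_sq]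
  exact contraction_of_bounds hβ hμ0.le hμ (sq_nonneg _) h1 hg

/-- deterministic contraction step for one gradient-descent iteration. -/
theorem contraction_step (n : ℕ) (x xs g : EuclideanSpace ℂ (Fin n)) (α β μ : ℝ)
    (hα : 0 < α) (hβ : 0 < β) (hμ0 : 0 < μ) (hμ : μ ≤ α / β ^ 2)
    (h1 : α * ‖x - xs‖ ^ 2 ≤ (inner ℂ (x - xs) g : ℂ).re)
    (h2 : ‖g‖ ≤ β * ‖x - xs‖) :
    ‖xs - (x - μ • g)‖ ^ 2 ≤ (1 - μ * α) * ‖x - xs‖ ^ 2 :=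
  contraction_step_general n x xs g α β μ hβ hμ0 hμ h1 h2
end

section
/- Let x^s ∈ ℂ^n, x^s ≠ 0. Then the set of x ∈ ℂ^n satisfying (2‖x‖² − ‖x^s‖²)·x − ⟨x^s, x⟩·x^s = 0 is exactly the union of the three sets E1 = { e^{iθ} x^s : θ ∈ ℝ }, E2 = {0}, and E3 = { x ∈ ℂ^n : ⟨x^s, x⟩ = 0 and ‖x‖ = ‖x^s‖/√2 }. -/
/-!
Write `λ = 2‖x‖² - ‖xs‖²`. Pairing `λ • x - ⟪xs, x⟫ • xs = 0` with `xs` gives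
`2 (‖x‖² - ‖xs‖²) ⟪xs, x⟫ = 0`. If `⟪xs, x⟫ = 0`, the equation reduces to `λ • x = 0`, so `x = 0`
or `‖x‖ = ‖xs‖ / √2`. Otherwise `‖x‖ = ‖xs‖`, and the equation exhibits `x` as a multiple of `xs`
of the same norm, that is, a unimodular multiple `e^{iθ} xs`.
-/

open Complex

lemma Real.eq_div_sqrt_two_iff {a b : ℝ} (ha : 0 ≤ a) (hb : 0 ≤ b) :
    a = b / √2 ↔ 2 * a ^ 2 - b ^ 2 = 0 := by
  have hsq : a = b / √2 ↔ a ^ 2 = (b / √2) ^ 2 := (sq_eq_sq₀ ha (by positivity)).symm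
  rw [hsq, div_pow, Real.sq_sqrt zero_le_two]
  constructor <;> intro h <;> linarith

lemma exists_exp_mul_I_smul_of_norm_smul_eq {F : Type*} [NormedAddCommGroup F] [NormedSpace ℂ F]
    {c : ℂ} {y : F} (hy : y ≠ 0) (h : ‖c • y‖ = ‖y‖) : ∃ θ : ℝ, c • y = exp (θ * I) • y := by
  have hc : ‖c‖ = 1 := by
    rw [norm_smul] at h
    exact (mul_eq_right₀ (norm_ne_zero_iff.mpr hy)).mp h
  obtain ⟨θ, hθ⟩ := (Complex.norm_eq_one_iff c).mp hc
  exact ⟨θ, by rw [hθ]⟩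

section

variable {E : Type*} [NormedAddCommGroup E] [InnerProductSpace ℂ E]

/-- Half the real gradient of the expected Wirtinger objective `g`. -/
noncomputable def wirtingerGrad (xs x : E) : E :=
  ((2 * ‖x‖ ^ 2 - ‖xs‖ ^ 2 : ℝ) : ℂ) • x - (inner ℂ xs x : ℂ) • xs

lemma inner_wirtingerGrad (xs x : E) :
    inner ℂ xs (wirtingerGrad xs x) = ((2 * (‖x‖ ^ 2 - ‖xs‖ ^ 2) : ℝ) : ℂ) * inner ℂ xs x := by
  rw [wirtingerGrad, inner_sub_right, inner_smul_right, inner_smul_right,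
    inner_self_eq_norm_sq_to_K, RCLike.ofReal_eq_complex_ofReal]
  push_cast
  ring

@[simp]
lemma wirtingerGrad_zero_right (xs : E) : wirtingerGrad xs 0 = 0 := by
  simp [wirtingerGrad]

lemma wirtingerGrad_exp_mul_I_smul (xs : E) (θ : ℝ) :
    wirtingerGrad xs (exp (θ * I) • xs) = 0 := by
  have hunit : ‖exp (θ * I)‖ = 1 := by simp [Complex.norm_exp]
  rw [wirtingerGrad, norm_smul, hunit, one_mul, inner_smul_right, inner_self_eq_norm_sq_to_K,
    RCLike.ofReal_eq_complex_ofReal, smul_smul, sub_eq_zero]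
  congr 1
  push_cast
  ring

lemma wirtingerGrad_eq_zero_iff_of_inner_eq_zero {xs x : E} (h : inner ℂ xs x = 0) :
    wirtingerGrad xs x = 0 ↔ x = 0 ∨ ‖x‖ = ‖xs‖ / √2 := by
  rw [wirtingerGrad, h, zero_smul, sub_zero, smul_eq_zero, Complex.ofReal_eq_zero,
    Real.eq_div_sqrt_two_iff (norm_nonneg x) (norm_nonneg xs), or_comm]

lemma exists_eq_exp_mul_I_smul_of_wirtingerGrad_eq_zero {xs x : E} (h : inner ℂ xs x ≠ 0)
    (hg : wirtingerGrad xs x = 0) : ∃ θ : ℝ, x = exp (θ * I) • xs := by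
  have hxs : xs ≠ 0 := by
    rintro rfl
    exact h (inner_zero_left x)
  have hnorm_sq : ‖x‖ ^ 2 = ‖xs‖ ^ 2 := by
    have hpair := inner_wirtingerGrad xs x
    rw [hg, inner_zero_right, eq_comm, mul_eq_zero, Complex.ofReal_eq_zero] at hpair
    linarith [hpair.resolve_right h]
  have hnorm : ‖x‖ = ‖xs‖ := (sq_eq_sq₀ (norm_nonneg _) (norm_nonneg _)).mp hnorm_sq
  have hsq_ne : ((‖xs‖ ^ 2 : ℝ) : ℂ) ≠ 0 := by
    exact_mod_cast pow_ne_zero 2 (norm_ne_zero_iff.mpr hxs)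
  have hx : x = (inner ℂ xs x / ((‖xs‖ ^ 2 : ℝ) : ℂ)) • xs := by
    have hcoef : ((2 * ‖xs‖ ^ 2 - ‖xs‖ ^ 2 : ℝ) : ℂ) = ((‖xs‖ ^ 2 : ℝ) : ℂ) := by
      congr 1
      ring
    rw [wirtingerGrad, hnorm, hcoef, sub_eq_zero] at hg
    rw [div_eq_inv_mul, mul_smul, ← hg, smul_smul, inv_mul_cancel₀ hsq_ne, one_smul]
  obtain ⟨θ, hθ⟩ := exists_exp_mul_I_smul_of_norm_smul_eq hxs (by rw [← hx]; exact hnorm)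
  exact ⟨θ, hx.trans hθ⟩

lemma wirtingerGrad_eq_zero_iff {xs x : E} :
    wirtingerGrad xs x = 0 ↔
      (∃ θ : ℝ, x = exp (θ * I) • xs) ∨ x = 0 ∨ (inner ℂ xs x = 0 ∧ ‖x‖ = ‖xs‖ / √2) := by
  constructor
  · intro hg
    by_cases h : inner ℂ xs x = 0
    · rcases (wirtingerGrad_eq_zero_iff_of_inner_eq_zero h).mp hg with hx | hx
      exacts [Or.inr (Or.inl hx), Or.inr (Or.inr ⟨h, hx⟩)]
    · exact Or.inl (exists_eq_exp_mul_I_smul_of_wirtingerGrad_eq_zero h hg)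
  · rintro (⟨θ, rfl⟩ | rfl | ⟨h, hx⟩)
    · exact wirtingerGrad_exp_mul_I_smul xs θ
    · exact wirtingerGrad_zero_right xs
    · exact (wirtingerGrad_eq_zero_iff_of_inner_eq_zero h).mpr (Or.inr hx)

end

theorem critical_points_expected_objective_general (n : ℕ)
    (xs : EuclideanSpace ℂ (Fin n)) :
    {x : EuclideanSpace ℂ (Fin n) |
        ((2 * ‖x‖ ^ 2 - ‖xs‖ ^ 2 : ℝ) : ℂ) • x - (inner ℂ xs x : ℂ) • xs = 0}
      = {x : EuclideanSpace ℂ (Fin n) | ∃ θ : ℝ, x = Complex.exp (θ * Complex.I) • xs}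
        ∪ {0}
        ∪ {x : EuclideanSpace ℂ (Fin n) |
            (inner ℂ xs x : ℂ) = 0 ∧ ‖x‖ = ‖xs‖ / Real.sqrt 2} := by
  ext x
  simp only [Set.mem_ofPred_eq, Set.mem_union, Set.mem_singleton_iff, or_assoc]
  exact wirtingerGrad_eq_zero_iff

/-- the critical points of the expected Wirtinger objective, i.e.
the zeros of `x ↦ (2‖x‖² - ‖x^s‖²)x - ⟨x^s,x⟩x^s`, are exactly the global
phase orbit of `x^s`, the origin, and the circle of vectors orthogonal to
`x^s` of norm `‖x^s‖/√2`. -/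
theorem critical_points_expected_objective (n : ℕ)
    (xs : EuclideanSpace ℂ (Fin n)) (hxs : xs ≠ 0) :
    {x : EuclideanSpace ℂ (Fin n) |
        ((2 * ‖x‖ ^ 2 - ‖xs‖ ^ 2 : ℝ) : ℂ) • x - (inner ℂ xs x : ℂ) • xs = 0}
      = {x : EuclideanSpace ℂ (Fin n) | ∃ θ : ℝ, x = Complex.exp (θ * Complex.I) • xs}
        ∪ {0}
        ∪ {x : EuclideanSpace ℂ (Fin n) |
            (inner ℂ xs x : ℂ) = 0 ∧ ‖x‖ = ‖xs‖ / Real.sqrt 2} :=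
  critical_points_expected_objective_general n xs
end

section
/- Let x^s ∈ ℂ^n, x^s ≠ 0, and define g : ℂ^n → ℝ by g(x) = ‖x‖⁴ − ‖x‖²‖x^s‖² − |⟨x, x^s⟩|² + ‖x^s‖⁴. For all x, h ∈ ℂ^n, the second directional derivative (d²/dt²) g(x + t h) at t = 0 equals Q_x(h) := 2((2‖x‖² − ‖x^s‖²)‖h‖² + 4(Re⟨x,h⟩)² − |⟨x^s,h⟩|²). Moreover: (i) for every h ≠ 0, Q_0(h) ≤ −2‖x^s‖²‖h‖² < 0; (ii) for every x with ⟨x^s, x⟩ = 0 and ‖x‖ = ‖x^s‖/√2, one has Q_x(x^s) = −2‖x^s‖⁴ < 0. In particular, no critical point of g in {0} ∪ { x : ⟨x^s,x⟩ = 0, ‖x‖ = ‖x^s‖/√2 } satisfies the second-order optimality condition Q_x ⪰ 0. -/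
/-!
Along the line `t ↦ x + t • h`, both `‖x + t • h‖²` and `|⟪x + t • h, xˢ⟫|²` are quadratic in `t`,
so `g` restricts to a quartic polynomial and its second derivative at `0` is twice the
coefficient of `t²`.
-/

open RCLike
open scoped InnerProductSpace

lemma iteratedDeriv_two_quartic_zero {𝕜 : Type*} [NontriviallyNormedField 𝕜]
    (c₀ c₁ c₂ c₃ c₄ : 𝕜) :
    iteratedDeriv 2 (fun t => c₀ + c₁ * t + c₂ * t ^ 2 + c₃ * t ^ 3 + c₄ * t ^ 4) 0 = 2 * c₂ := by
  rw [iteratedDeriv_fun_add (by fun_prop) (by fun_prop),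
    iteratedDeriv_fun_add (by fun_prop) (by fun_prop),
    iteratedDeriv_fun_add (by fun_prop) (by fun_prop), iteratedDeriv_const_add two_pos]
  simp [iteratedDeriv_const_mul_field c₁ (fun t : 𝕜 => t), iteratedDeriv_fun_id_zero, mul_comm]

section

variable (𝕜 : Type*) {E : Type*} [RCLike 𝕜] [NormedAddCommGroup E] [InnerProductSpace 𝕜 E]

def expectedObjective (y x : E) : ℝ :=
  ‖x‖ ^ 4 - ‖x‖ ^ 2 * ‖y‖ ^ 2 - ‖⟪x, y⟫_𝕜‖ ^ 2 + ‖y‖ ^ 4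

def hessianForm (y x h : E) : ℝ :=
  2 * ((2 * ‖x‖ ^ 2 - ‖y‖ ^ 2) * ‖h‖ ^ 2 + 4 * (re ⟪x, h⟫_𝕜) ^ 2 - ‖⟪y, h⟫_𝕜‖ ^ 2)

variable {𝕜}

theorem hessianForm_zero_le (y h : E) : hessianForm 𝕜 y 0 h ≤ -2 * ‖y‖ ^ 2 * ‖h‖ ^ 2 := by
  have := sq_nonneg ‖⟪y, h⟫_𝕜‖
  simp only [hessianForm, norm_zero, inner_zero_left, map_zero]
  linarith

theorem hessianForm_self_of_inner_eq_zero {y x : E} (hyx : ⟪y, x⟫_𝕜 = 0)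
    (hx : ‖x‖ = ‖y‖ / √2) : hessianForm 𝕜 y x y = -2 * ‖y‖ ^ 4 := by
  have hx2 : ‖x‖ ^ 2 = ‖y‖ ^ 2 / 2 := by rw [hx, div_pow, Real.sq_sqrt zero_le_two]
  rw [hessianForm, hx2, inner_eq_zero_symm.1 hyx, inner_self_eq_norm_sq_to_K, norm_pow,
    norm_ofReal, abs_norm]
  simp only [map_zero]
  ring

variable [Module ℝ E] [IsScalarTower ℝ 𝕜 E]

lemma norm_add_real_smul_sq (x h : E) (t : ℝ) :
    ‖x + t • h‖ ^ 2 = ‖x‖ ^ 2 + 2 * re ⟪x, h⟫_𝕜 * t + ‖h‖ ^ 2 * t ^ 2 := by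
  rw [norm_add_sq (𝕜 := 𝕜), real_smul_eq_coe_smul (K := 𝕜), inner_smul_real_right, norm_smul,
    smul_re, norm_ofReal, mul_pow, sq_abs]
  ring

lemma inner_add_real_smul_left (x h y : E) (t : ℝ) :
    ⟪x + t • h, y⟫_𝕜 = ⟪x, y⟫_𝕜 + t • ⟪h, y⟫_𝕜 := by
  rw [inner_add_left, real_smul_eq_coe_smul (K := 𝕜), inner_smul_real_left]

lemma norm_inner_add_real_smul_left_sq (x h y : E) (t : ℝ) :
    ‖⟪x + t • h, y⟫_𝕜‖ ^ 2
      = ‖⟪x, y⟫_𝕜‖ ^ 2 + 2 * re ⟪⟪x, y⟫_𝕜, ⟪h, y⟫_𝕜⟫_𝕜 * t + ‖⟪y, h⟫_𝕜‖ ^ 2 * t ^ 2 := by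
  rw [inner_add_real_smul_left, norm_add_real_smul_sq (𝕜 := 𝕜), norm_inner_symm h]

variable (𝕜) in
theorem iteratedDeriv_two_expectedObjective_line (y x h : E) :
    iteratedDeriv 2 (fun t : ℝ => expectedObjective 𝕜 y (x + t • h)) 0 = hessianForm 𝕜 y x h := by
  have quartic : (fun t : ℝ => expectedObjective 𝕜 y (x + t • h)) = fun t =>
      expectedObjective 𝕜 y x
        + (2 * re ⟪x, h⟫_𝕜 * (2 * ‖x‖ ^ 2 - ‖y‖ ^ 2) - 2 * re ⟪⟪x, y⟫_𝕜, ⟪h, y⟫_𝕜⟫_𝕜) * t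
        + ((2 * ‖x‖ ^ 2 - ‖y‖ ^ 2) * ‖h‖ ^ 2 + 4 * (re ⟪x, h⟫_𝕜) ^ 2 - ‖⟪y, h⟫_𝕜‖ ^ 2) * t ^ 2
        + 4 * re ⟪x, h⟫_𝕜 * ‖h‖ ^ 2 * t ^ 3 + ‖h‖ ^ 4 * t ^ 4 := by
    funext t
    rw [expectedObjective, expectedObjective, show ‖x + t • h‖ ^ 4 = (‖x + t • h‖ ^ 2) ^ 2 by ring,
      norm_add_real_smul_sq (𝕜 := 𝕜), norm_inner_add_real_smul_left_sq]
    ring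
  rw [quartic, iteratedDeriv_two_quartic_zero, hessianForm]

end

open scoped ComplexInnerProductSpace in
/-- the Hessian quadratic form of the expected Wirtinger
objective `g(x) = ‖x‖⁴ - ‖x‖²‖x^s‖² - |⟨x,x^s⟩|² + ‖x^s‖⁴`, and the fact that
the non-global critical points `0` and `{⟨x^s,x⟩ = 0, ‖x‖ = ‖x^s‖/√2}` fail
the second-order optimality condition. -/
theorem hessian_expected_objective (n : ℕ)
    (xs : EuclideanSpace ℂ (Fin n)) (hxs : xs ≠ 0)
    (g : EuclideanSpace ℂ (Fin n) → ℝ)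
    (hg : ∀ x, g x = ‖x‖ ^ 4 - ‖x‖ ^ 2 * ‖xs‖ ^ 2
        - ‖(inner ℂ x xs : ℂ)‖ ^ 2 + ‖xs‖ ^ 4)
    (Q : EuclideanSpace ℂ (Fin n) → EuclideanSpace ℂ (Fin n) → ℝ)
    (hQ : ∀ x h, Q x h = 2 * ((2 * ‖x‖ ^ 2 - ‖xs‖ ^ 2) * ‖h‖ ^ 2
        + 4 * ((inner ℂ x h : ℂ).re) ^ 2 - ‖(inner ℂ xs h : ℂ)‖ ^ 2)) :
    (∀ x h : EuclideanSpace ℂ (Fin n),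
        iteratedDeriv 2 (fun t : ℝ => g (x + t • h)) 0 = Q x h) ∧
    (∀ h : EuclideanSpace ℂ (Fin n), h ≠ 0 →
        Q 0 h ≤ -2 * ‖xs‖ ^ 2 * ‖h‖ ^ 2 ∧ Q 0 h < 0) ∧
    (∀ x : EuclideanSpace ℂ (Fin n), (inner ℂ xs x : ℂ) = 0 → ‖x‖ = ‖xs‖ / Real.sqrt 2 →
        Q x xs = -2 * ‖xs‖ ^ 4 ∧ Q x xs < 0) ∧
    (∀ x : EuclideanSpace ℂ (Fin n),
        (x = 0 ∨ ((inner ℂ xs x : ℂ) = 0 ∧ ‖x‖ = ‖xs‖ / Real.sqrt 2)) →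
        ¬(∀ h, 0 ≤ Q x h)) := by
  obtain rfl : g = expectedObjective ℂ xs := funext hg
  obtain rfl : Q = hessianForm ℂ xs := funext fun x => funext (hQ x)
  have hxs_pos : 0 < ‖xs‖ := norm_pos_iff.2 hxs
  have at_zero (h) (hh : h ≠ 0) : hessianForm ℂ xs 0 h ≤ -2 * ‖xs‖ ^ 2 * ‖h‖ ^ 2 ∧
      hessianForm ℂ xs 0 h < 0 := by
    have hQ0 := hessianForm_zero_le (𝕜 := ℂ) xs h
    have := mul_pos (pow_pos hxs_pos 2) (pow_pos (norm_pos_iff.2 hh) 2)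
    exact ⟨hQ0, by linarith⟩
  have on_sphere (x) (hx : ⟪xs, x⟫_ℂ = 0) (hnx : ‖x‖ = ‖xs‖ / √2) :
      hessianForm ℂ xs x xs = -2 * ‖xs‖ ^ 4 ∧ hessianForm ℂ xs x xs < 0 := by
    have hQx := hessianForm_self_of_inner_eq_zero hx hnx
    exact ⟨hQx, by rw [hQx]; linarith [pow_pos hxs_pos 4]⟩
  refine ⟨iteratedDeriv_two_expectedObjective_line ℂ xs, at_zero, on_sphere, ?_⟩
  rintro x (rfl | ⟨hx, hnx⟩) hall
  · exact (at_zero xs hxs).2.not_ge (hall xs)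
  · exact (on_sphere x hx hnx).2.not_ge (hall xs)
end

section
/- Let C ∈ H_n(ℂ) be a Hermitian matrix with C_{kk} = 1 for all k. Let z^{obj} ∈ ℂ^n be any maximizer of z ↦ z^*Cz over the set { z ∈ ℂ^n : |z_1| = … = |z_n| = 1 }. Let P : ℂ^n → ℂ^n be the entrywise phase projection, P(w)_k = w_k/|w_k| (with the convention 0/0 = 1). Then P(C z^{obj}) = z^{obj}, i.e. z^{obj} is a fixed point of the operator z ↦ P(Cz). -/
open Matrix

/-- Entrywise phase projection: `phase w = w / |w|`, with the convention `0/0 = 1`. -/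
noncomputable def phase (w : ℂ) : ℂ :=
  letI := Classical.dec (w = 0)
  if w = 0 then 1 else w / ‖w‖

/-!
Fix a coordinate `k` and write `(C z)_k = z_k + b` (using `C_kk = 1`). On the torus, moving the
`k`-th coordinate of `z` to another unit `u` changes `z^* C z` by `2 Re(ū b) - 2 Re(z̄_k b)`, so at
a maximizer `z_k` maximizes `u ↦ Re(ū b)` over the unit circle. Hence `b = |b| z_k`, and
`(C z)_k = (1 + |b|) z_k` is a positive multiple of `z_k`, whose phase is `z_k`.
-/

open ComplexConjugate

theorem norm_phase (w : ℂ) : ‖phase w‖ = 1 := by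
  unfold phase
  split_ifs with hw
  · exact norm_one
  · simp [hw]

theorem conj_phase_mul_self (w : ℂ) : conj (phase w) * w = ‖w‖ := by
  unfold phase
  split_ifs with hw
  · simp [hw]
  · rw [map_div₀, Complex.conj_ofReal, div_mul_eq_mul_div, Complex.conj_mul', sq,
      mul_div_cancel_right₀ _ (by simpa using hw)]

theorem phase_mul_ofReal {z : ℂ} (hz : ‖z‖ = 1) {r : ℝ} (hr : 0 < r) : phase (z * r) = z := by
  have hr' : (r : ℂ) ≠ 0 := by exact_mod_cast hr.ne'
  have hzr : z * r ≠ 0 := mul_ne_zero (norm_ne_zero_iff.mp (by simp [hz])) hr'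
  rw [phase, if_neg hzr, norm_mul, hz, one_mul, Complex.norm_real, Real.norm_of_nonneg hr.le,
    mul_div_cancel_right₀ _ hr']

theorem Complex.eq_mul_norm_of_forall_re_conj_mul_le {z b : ℂ} (hz : ‖z‖ = 1)
    (hmax : ∀ u : ℂ, ‖u‖ = 1 → (conj u * b).re ≤ (conj z * b).re) : b = z * ‖b‖ := by
  have hnorm : ‖conj z * b‖ = ‖b‖ := by rw [norm_mul, Complex.norm_conj, hz, one_mul]
  have hre : (conj z * b).re = ‖conj z * b‖ := by
    refine le_antisymm (Complex.re_le_norm _) ?_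
    simpa [hnorm, hz, conj_phase_mul_self] using hmax _ (norm_phase b)
  have hreal : conj z * b = ‖b‖ := by
    rw [← hnorm]
    exact Complex.eq_coe_norm_of_nonneg (Complex.re_eq_norm.mp hre)
  calc b = z * conj z * b := by rw [Complex.mul_conj', hz]; simp
    _ = z * ‖b‖ := by rw [mul_assoc, hreal]

theorem sum_star_mul_mul_eq_star_dotProduct_mulVec {R ι : Type*} [CommSemiring R] [StarRing R]
    [Fintype ι] (A : Matrix ι ι R) (z : ι → R) :
    ∑ k, ∑ l, star (z k) * A k l * z l = star z ⬝ᵥ A *ᵥ z := by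
  simp [dotProduct, mulVec, Finset.mul_sum, mul_assoc]

theorem Matrix.IsHermitian.star_dotProduct_mulVec_add_single {R ι : Type*} [CommRing R]
    [StarRing R] [Fintype ι] [DecidableEq ι] {A : Matrix ι ι R} (hA : A.IsHermitian)
    (z : ι → R) (k : ι) (d : R) :
    star (z + Pi.single k d) ⬝ᵥ A *ᵥ (z + Pi.single k d) =
      star z ⬝ᵥ A *ᵥ z + (star d * (A *ᵥ z) k + star (star d * (A *ᵥ z) k)) +
        star d * A k k * d := by
  have hcol : star z ⬝ᵥ A *ᵥ Pi.single k d = star ((A *ᵥ z) k) * d := by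
    have h := congrFun (star_mulVec A z) k
    rw [hA.eq] at h
    rw [dotProduct_mulVec, dotProduct_single, ← h]
    rfl
  have hstar : star (Pi.single k d : ι → R) = Pi.single k (star d) := by
    ext j
    by_cases h : j = k <;> simp [h]
  rw [star_add, hstar, mulVec_add, add_dotProduct, dotProduct_add, dotProduct_add,
    single_dotProduct, single_dotProduct, hcol, mulVec_single]
  simp only [Pi.smul_apply, col_apply, MulOpposite.smul_eq_mul_unop, MulOpposite.unop_op, star_mul,
    star_star]
  ring

theorem re_conj_mul_le_of_isMaxOn_torus {ι : Type*} [Fintype ι] [DecidableEq ι]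
    {C : Matrix ι ι ℂ} (hC : C.IsHermitian) {k : ι} (hdiag : C k k = 1) {z : ι → ℂ}
    (hz : ∀ j, ‖z j‖ = 1)
    (hmax : IsMaxOn (fun z => (star z ⬝ᵥ C *ᵥ z).re) {z | ∀ j, ‖z j‖ = 1} z)
    {u : ℂ} (hu : ‖u‖ = 1) :
    (conj u * ((C *ᵥ z) k - z k)).re ≤ (conj (z k) * ((C *ᵥ z) k - z k)).re := by
  have hunit : ∀ j, ‖(z + Pi.single k (u - z k) : ι → ℂ) j‖ = 1 := by
    intro j
    by_cases hj : j = k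
    · subst hj; simpa using hu
    · simpa [hj] using hz j
  have h : (star (z + Pi.single k (u - z k)) ⬝ᵥ C *ᵥ (z + Pi.single k (u - z k))).re ≤
      (star z ⬝ᵥ C *ᵥ z).re := hmax hunit
  have hu2 : u.re * u.re + u.im * u.im = 1 := by
    rw [← Complex.normSq_apply, ← Complex.sq_norm, hu, one_pow]
  have hz2 : (z k).re * (z k).re + (z k).im * (z k).im = 1 := by
    rw [← Complex.normSq_apply, ← Complex.sq_norm, hz k, one_pow]
  rw [hC.star_dotProduct_mulVec_add_single, hdiag] at h
  simp only [Complex.star_def, map_sub, map_mul, Complex.conj_conj, mul_one, Complex.add_re,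
    Complex.mul_re, Complex.sub_re, Complex.sub_im, Complex.conj_re, Complex.conj_im] at h ⊢
  linarith

/-- any maximizer `z^{obj}` of `z ↦ z^* C z` over the torus
`{|z_1| = … = |z_n| = 1}` (for Hermitian `C` with unit diagonal) is a fixed
point of the generalized power method iteration `z ↦ P(Cz)`. -/
theorem gpm_fixed_point (n : ℕ) (C : Matrix (Fin n) (Fin n) ℂ)
    (hC : C.IsHermitian) (hdiag : ∀ k, C k k = 1)
    (zobj : Fin n → ℂ) (hz : ∀ k, ‖zobj k‖ = 1)
    (hmax : ∀ z : Fin n → ℂ, (∀ k, ‖z k‖ = 1) →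
      (∑ k, ∑ l, (starRingEnd ℂ) (z k) * C k l * z l).re ≤
        (∑ k, ∑ l, (starRingEnd ℂ) (zobj k) * C k l * zobj l).re) :
    ∀ k, phase (C.mulVec zobj k) = zobj k := by
  intro k
  have hmax' : IsMaxOn (fun z => (star z ⬝ᵥ C *ᵥ z).re) {z | ∀ j, ‖z j‖ = 1} zobj := by
    intro z hz'
    simpa only [Set.mem_ofPred_eq, ← Complex.star_def, sum_star_mul_mul_eq_star_dotProduct_mulVec] using hmax z hz'
  have hb := Complex.eq_mul_norm_of_forall_re_conj_mul_le (hz k) fun _ hu =>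
    re_conj_mul_le_of_isMaxOn_torus hC (hdiag k) hz hmax' hu
  have hmulVec : (C *ᵥ zobj) k = zobj k * ((1 + ‖(C *ᵥ zobj) k - zobj k‖ : ℝ) : ℂ) := by
    push_cast
    linear_combination hb
  rw [hmulVec, phase_mul_ofReal (hz k) (by positivity)]
end

section
/- Let A : S_n(ℝ) → ℝ^m be linear with adjoint A^*, and let r0, p be positive integers with r0 + p ≤ n. Let X0 ∈ S_n(ℝ) be positive semidefinite with column space equal to span(e_1,…,e_{r0}), and let V ∈ ℝ^{n×p} have column space equal to span(e_{r0+1},…,e_{r0+p}). Then, for any g1 ∈ ℝ^m, the following two properties are equivalent. (1) There exist C1, C2 ∈ S_n(ℝ) such that A^*(g1) + C1 = C2, C1·X0 = 0, C1 ⪰ 0, rank(C1) = n − r0, and C2·V = 0. (2) Writing A^*(g1) in blocks according to the decomposition of indices into {1,…,r0}, {r0+1,…,r0+p}, {r0+p+1,…,n}, the (1,2)-block of A^*(g1) is zero and the (2,2)-block G3 ∈ S_p(ℝ) of A^*(g1) is negative definite. -/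
open Matrix
open scoped ComplexOrder

/-!
Write `G = A^*(g1)`, and let `U = [e_1 … e_{r0}]`, `W = [e_{r0+1} … e_{r0+p}]`. The argument only
uses that the columns of `U` and `W` are orthonormal and mutually orthogonal: they span the column
spaces of `X0` and `V`, so `C1 X0 = 0 ↔ C1 U = 0` and `C2 V = 0 ↔ C2 W = 0`, and the blocks in (2)
are `Uᵀ G W` and `Wᵀ G W`. For `C1 ⪰ 0` with `C1 U = 0`, the rank condition says exactly
`ker C1 = range U`.

Given certificates, `Uᵀ G W = Uᵀ C2 W - Uᵀ C1 W = 0` and `-Wᵀ G W = Wᵀ C1 W`, which is definite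
because `ker C1` meets `range W` trivially. Conversely, if `A = -Wᵀ G W ≻ 0`, then
`C1 = (G W) A⁻¹ (G W)ᵀ + (1 - U Uᵀ - W Wᵀ)` is a sum of two positive semidefinite matrices with
`C1 U = 0` and `C1 W = -G W`; since `Wᵀ C1 = -(G W)ᵀ`, a vector in `ker C1` has no component
along `range W` nor orthogonal to `range U ⊕ range W`, so `ker C1 = range U`.
-/

namespace Matrix

theorem mul_eq_zero_iff_range_le_ker {ι κ R : Type*} [Fintype ι] [Fintype κ] [CommRing R]
    {C : Matrix ι ι R} {X : Matrix ι κ R} :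
    C * X = 0 ↔ LinearMap.range X.mulVecLin ≤ LinearMap.ker C.mulVecLin := by
  classical
  rw [LinearMap.range_le_ker_iff, ← mulVecLin_mul, ← toLin'_apply', LinearEquiv.map_eq_zero_iff]

theorem mul_eq_zero_iff_of_range_eq {ι κ κ' R : Type*} [Fintype ι] [Fintype κ] [Fintype κ']
    [CommRing R] {C : Matrix ι ι R} {X : Matrix ι κ R} {Y : Matrix ι κ' R}
    (h : LinearMap.range X.mulVecLin = LinearMap.range Y.mulVecLin) : C * X = 0 ↔ C * Y = 0 := by
  rw [mul_eq_zero_iff_range_le_ker, mul_eq_zero_iff_range_le_ker, h]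

theorem mulVec_injective_of_transpose_mul_self_eq_one {ι κ R : Type*} [Fintype ι] [Fintype κ]
    [DecidableEq κ] [CommRing R] {B : Matrix ι κ R} (hB : Bᵀ * B = 1) :
    Function.Injective B.mulVec :=
  Function.LeftInverse.injective (g := Bᵀ.mulVec) fun v => by
    rw [mulVec_mulVec, hB, one_mulVec]

theorem rank_eq_card_sub_iff_ker_eq {ι κ K : Type*} [Fintype ι] [Fintype κ] [Field K]
    {C : Matrix ι ι K} {B : Matrix ι κ K} (hB : Function.Injective B.mulVec) (hCB : C * B = 0) :
    C.rank = Fintype.card ι - Fintype.card κ ↔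
      LinearMap.ker C.mulVecLin = LinearMap.range B.mulVecLin := by
  have hle := mul_eq_zero_iff_range_le_ker.mp hCB
  have hrange : Module.finrank K (LinearMap.range B.mulVecLin) = Fintype.card κ := by
    rw [LinearMap.finrank_range_of_inj hB, Module.finrank_fintype_fun_eq_card]
  have hnullity := LinearMap.finrank_range_add_finrank_ker C.mulVecLin
  have hker_le := Submodule.finrank_le (LinearMap.ker C.mulVecLin)
  have hrange_le := Submodule.finrank_mono hle
  rw [Module.finrank_fintype_fun_eq_card] at hnullity hker_le
  change Module.finrank K (LinearMap.range C.mulVecLin) = _ ↔ _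
  constructor
  · intro h
    exact (Submodule.eq_of_le_of_finrank_eq hle (by omega)).symm
  · intro h
    rw [h] at hnullity
    omega

theorem PosSemidef.posDef_conjTranspose_mul_mul {ι κ 𝕜 : Type*} [Fintype ι] [Fintype κ]
    [RCLike 𝕜] {A : Matrix ι ι 𝕜} {B : Matrix ι κ 𝕜} (hA : A.PosSemidef)
    (hAB : Function.Injective (A * B).mulVec) : (Bᴴ * A * B).PosDef := by
  refine PosDef.of_dotProduct_mulVec_pos (hA.conjTranspose_mul_mul_same B).isHermitian
    fun x hx => ?_
  have hquad : star x ⬝ᵥ (Bᴴ * A * B) *ᵥ x = star (B *ᵥ x) ⬝ᵥ A *ᵥ (B *ᵥ x) := by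
    rw [← mulVec_mulVec, ← mulVec_mulVec, dotProduct_mulVec, ← star_mulVec]
  have hne : A *ᵥ (B *ᵥ x) ≠ 0 := by
    rw [mulVec_mulVec]
    exact fun h => hx (hAB (h.trans (mulVec_zero _).symm))
  rw [hquad]
  exact (hA.dotProduct_mulVec_nonneg _).lt_of_ne' (mt (hA.dotProduct_mulVec_zero_iff _).mp hne)

theorem submatrix_eq_zero_iff {l m n o α : Type*} [Zero α] {M : Matrix m n α} {e : l → m}
    {f : o → n} : M.submatrix e f = 0 ↔ ∀ i ∈ Set.range e, ∀ j ∈ Set.range f, M i j = 0 := by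
  constructor
  · rintro h _ ⟨a, rfl⟩ _ ⟨b, rfl⟩
    exact congrFun (congrFun h a) b
  · intro h
    ext a b
    exact h _ ⟨a, rfl⟩ _ ⟨b, rfl⟩

theorem IsSymm.transpose_mul_mul_eq_zero {ι κ κ' R : Type*} [Fintype ι] [CommRing R]
    {G : Matrix ι ι R} {U : Matrix ι κ R} {W : Matrix ι κ' R} (hG : G.IsSymm)
    (hUGW : Uᵀ * G * W = 0) : (G * W)ᵀ * U = 0 := by
  rw [← transpose_zero, ← hUGW, transpose_mul, transpose_mul, transpose_mul, hG.eq,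
    transpose_transpose, Matrix.mul_assoc]

section UnitCols

variable {ι κ R : Type*} [DecidableEq ι]

def unitCols (R : Type*) [Zero R] [One R] (e : κ → ι) : Matrix ι κ R :=
  (1 : Matrix ι ι R).submatrix id e

theorem unitCols_apply [Zero R] [One R] (e : κ → ι) (i : ι) (a : κ) :
    unitCols R e i a = (1 : Matrix ι ι R) i (e a) :=
  rfl

variable [CommRing R]

theorem transpose_unitCols_mul [Fintype ι] {κ' : Type*} (e : κ → ι) (M : Matrix ι κ' R) :
    (unitCols R e)ᵀ * M = M.submatrix e id := by
  ext a b
  simp [unitCols, mul_apply, one_apply]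

theorem mul_unitCols [Fintype ι] {κ' : Type*} (e : κ → ι) (M : Matrix κ' ι R) :
    M * unitCols R e = M.submatrix id e := by
  ext a b
  simp [unitCols, mul_apply, one_apply]

theorem transpose_unitCols_mul_mul_unitCols [Fintype ι] {κ' : Type*} (e : κ → ι) (f : κ' → ι)
    (M : Matrix ι ι R) : (unitCols R e)ᵀ * M * unitCols R f = M.submatrix e f := by
  rw [transpose_unitCols_mul, mul_unitCols, submatrix_submatrix, Function.comp_id,
    Function.id_comp]

theorem transpose_unitCols_mul_unitCols_self [Fintype ι] [DecidableEq κ] {e : κ → ι}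
    (he : Function.Injective e) : (unitCols R e)ᵀ * unitCols R e = 1 := by
  rw [← Matrix.mul_one (unitCols R e)ᵀ, transpose_unitCols_mul_mul_unitCols]
  exact submatrix_one e he

theorem transpose_unitCols_mul_unitCols_eq_zero [Fintype ι] {κ' : Type*} {e : κ → ι}
    {f : κ' → ι} (hef : ∀ a b, e a ≠ f b) : (unitCols R e)ᵀ * unitCols R f = 0 := by
  rw [← Matrix.mul_one (unitCols R e)ᵀ, transpose_unitCols_mul_mul_unitCols]
  ext a b
  exact one_apply_ne (hef a b)

variable [Fintype κ]

theorem unitCols_mulVec_apply_of_notMem_range (e : κ → ι) (v : κ → R) {i : ι}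
    (hi : i ∉ Set.range e) : (unitCols R e *ᵥ v) i = 0 :=
  Finset.sum_eq_zero fun a _ => by
    simp only [unitCols_apply, one_apply_ne fun h => hi ⟨a, h.symm⟩, zero_mul]

theorem unitCols_mulVec_apply_self {e : κ → ι} (he : Function.Injective e) (v : κ → R) (a : κ) :
    (unitCols R e *ᵥ v) (e a) = v a := by
  rw [mulVec, dotProduct, Finset.sum_eq_single a]
  · rw [unitCols_apply, one_apply_eq, one_mul]
  · intro b _ hb
    rw [unitCols_apply, one_apply_ne (he.ne hb).symm, zero_mul]
  · simp

theorem range_unitCols {e : κ → ι} (he : Function.Injective e) :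
    LinearMap.range (unitCols R e).mulVecLin =
      Submodule.span R {x | ∀ i ∉ Set.range e, x i = 0} := by
  refine le_antisymm ?_ (Submodule.span_le.mpr fun x hx => ⟨x ∘ e, funext fun i => ?_⟩)
  · rintro _ ⟨v, rfl⟩
    exact Submodule.subset_span fun i hi => unitCols_mulVec_apply_of_notMem_range e v hi
  · by_cases hi : i ∈ Set.range e
    · obtain ⟨a, rfl⟩ := hi
      exact unitCols_mulVec_apply_self he _ a
    · rw [mulVecLin_apply, unitCols_mulVec_apply_of_notMem_range e _ hi, hx i hi]

end UnitCols

end Matrix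

namespace DualCertificate

section Certificate

variable {ι κ₁ κ₂ : Type*} [Fintype κ₁] [Fintype κ₂]
  {G : Matrix ι ι ℝ} {U : Matrix ι κ₁ ℝ} {W : Matrix ι κ₂ ℝ}

def complProj [DecidableEq ι] (U : Matrix ι κ₁ ℝ) (W : Matrix ι κ₂ ℝ) : Matrix ι ι ℝ :=
  1 - U * Uᵀ - W * Wᵀ

theorem transpose_complProj [DecidableEq ι] : (complProj U W)ᵀ = complProj U W := by
  simp [complProj, transpose_sub, transpose_mul]

variable [Fintype ι]

theorem blocks_of_certificate [DecidableEq κ₂] {C₁ C₂ : Matrix ι ι ℝ}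
    (hU : Function.Injective U.mulVec) (hWW : Wᵀ * W = 1) (hUW : Uᵀ * W = 0)
    (hC₁ : C₁.PosSemidef) (hC₁U : C₁ * U = 0)
    (hrank : C₁.rank = Fintype.card ι - Fintype.card κ₁) (hGC : G + C₁ = C₂)
    (hC₂W : C₂ * W = 0) :
    Uᵀ * G * W = 0 ∧ (-(Wᵀ * G * W)).PosDef := by
  obtain rfl : G = C₂ - C₁ := eq_sub_of_add_eq hGC
  have hUC₁ : Uᵀ * C₁ = 0 := by
    rw [← (isHermitian_iff_isSymm.mp hC₁.isHermitian).eq, ← transpose_mul, hC₁U, transpose_zero]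
  have hker := (rank_eq_card_sub_iff_ker_eq hU hC₁U).mp hrank
  have hinj : Function.Injective (C₁ * W).mulVec := by
    rw [← coe_mulVecLin, ← LinearMap.ker_eq_bot, ker_mulVecLin_eq_bot_iff]
    intro w hw
    obtain ⟨v, hv⟩ : W *ᵥ w ∈ LinearMap.range U.mulVecLin := by
      rwa [← hker, LinearMap.mem_ker, mulVecLin_apply, mulVec_mulVec]
    calc w = Wᵀ *ᵥ (W *ᵥ w) := by rw [mulVec_mulVec, hWW, one_mulVec]
      _ = (Uᵀ * W)ᵀ *ᵥ v := by
        rw [← hv, mulVecLin_apply, mulVec_mulVec, transpose_mul, transpose_transpose]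
      _ = 0 := by rw [hUW, transpose_zero, zero_mulVec]
  refine ⟨by rw [Matrix.mul_sub, Matrix.sub_mul, Matrix.mul_assoc, hC₂W, hUC₁]; simp, ?_⟩
  have hblock : -(Wᵀ * (C₂ - C₁) * W) = Wᴴ * C₁ * W := by
    rw [Matrix.mul_sub, Matrix.sub_mul, Matrix.mul_assoc Wᵀ C₂, hC₂W,
      conjTranspose_eq_transpose_of_trivial]
    simp
  rw [hblock]
  exact hC₁.posDef_conjTranspose_mul_mul hinj

variable [DecidableEq ι]

theorem complProj_mul_left [DecidableEq κ₁] (hUU : Uᵀ * U = 1) (hUW : Uᵀ * W = 0) :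
    complProj U W * U = 0 := by
  have hWU : Wᵀ * U = 0 := by rw [← transpose_transpose U, ← transpose_mul, hUW, transpose_zero]
  rw [complProj, Matrix.sub_mul, Matrix.sub_mul, Matrix.mul_assoc, Matrix.mul_assoc, hUU, hWU]
  simp

theorem complProj_mul_right [DecidableEq κ₂] (hWW : Wᵀ * W = 1) (hUW : Uᵀ * W = 0) :
    complProj U W * W = 0 := by
  rw [complProj, Matrix.sub_mul, Matrix.sub_mul, Matrix.mul_assoc, Matrix.mul_assoc, hWW, hUW]
  simp

theorem complProj_posSemidef [DecidableEq κ₁] [DecidableEq κ₂] (hUU : Uᵀ * U = 1)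
    (hWW : Wᵀ * W = 1) (hUW : Uᵀ * W = 0) : (complProj U W).PosSemidef := by
  have hidem : complProj U W * (complProj U W)ᴴ = complProj U W := by
    rw [conjTranspose_eq_transpose_of_trivial, transpose_complProj]
    conv_lhs => enter [2]; rw [complProj]
    rw [Matrix.mul_sub, Matrix.mul_sub, ← Matrix.mul_assoc, ← Matrix.mul_assoc,
      complProj_mul_left hUU hUW, complProj_mul_right hWW hUW]
    simp
  rw [← hidem]
  exact posSemidef_self_mul_conjTranspose _

variable [DecidableEq κ₂]

noncomputable def certificate (G : Matrix ι ι ℝ) (U : Matrix ι κ₁ ℝ) (W : Matrix ι κ₂ ℝ) :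
    Matrix ι ι ℝ :=
  G * W * (-(Wᵀ * G * W))⁻¹ * (G * W)ᵀ + complProj U W

theorem certificate_posSemidef [DecidableEq κ₁] (hUU : Uᵀ * U = 1) (hWW : Wᵀ * W = 1)
    (hUW : Uᵀ * W = 0) (hA : (-(Wᵀ * G * W)).PosDef) : (certificate G U W).PosSemidef := by
  refine PosSemidef.add ?_ (complProj_posSemidef hUU hWW hUW)
  simpa only [conjTranspose_eq_transpose_of_trivial] using
    hA.inv.posSemidef.mul_mul_conjTranspose_same (G * W)

theorem certificate_mul_left [DecidableEq κ₁] (hG : G.IsSymm) (hUGW : Uᵀ * G * W = 0)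
    (hUU : Uᵀ * U = 1) (hUW : Uᵀ * W = 0) : certificate G U W * U = 0 := by
  rw [certificate, Matrix.add_mul, complProj_mul_left hUU hUW, Matrix.mul_assoc _ (G * W)ᵀ,
    hG.transpose_mul_mul_eq_zero hUGW]
  simp

theorem add_certificate_mul_right (hG : G.IsSymm) (hWW : Wᵀ * W = 1) (hUW : Uᵀ * W = 0)
    (hA : (-(Wᵀ * G * W)).PosDef) : (G + certificate G U W) * W = 0 := by
  have hinv : (-(Wᵀ * G * W))⁻¹ * (Wᵀ * G * W) = -1 := by
    have h := nonsing_inv_mul _ ((isUnit_iff_isUnit_det _).mp hA.isUnit)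
    rwa [Matrix.mul_neg, neg_eq_iff_eq_neg] at h
  rw [certificate, Matrix.add_mul, Matrix.add_mul, complProj_mul_right hWW hUW,
    Matrix.mul_assoc _ (G * W)ᵀ, transpose_mul, hG.eq, Matrix.mul_assoc (G * W), hinv]
  simp

theorem ker_certificate_le (hG : G.IsSymm) (hUGW : Uᵀ * G * W = 0) (hWW : Wᵀ * W = 1)
    (hUW : Uᵀ * W = 0) (hA : (-(Wᵀ * G * W)).PosDef) :
    LinearMap.ker (certificate G U W).mulVecLin ≤ LinearMap.range U.mulVecLin := by
  intro x hx
  rw [LinearMap.mem_ker, mulVecLin_apply] at hx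
  have hWC : Wᵀ * certificate G U W = -(G * W)ᵀ := by
    have hWP : Wᵀ * complProj U W = 0 := by
      rw [← transpose_complProj, ← transpose_mul, complProj_mul_right hWW hUW, transpose_zero]
    have h := mul_nonsing_inv _ ((isUnit_iff_isUnit_det _).mp hA.isUnit)
    rw [Matrix.neg_mul, neg_eq_iff_eq_neg] at h
    rw [certificate, Matrix.mul_add, hWP, add_zero, ← Matrix.mul_assoc, ← Matrix.mul_assoc,
      ← Matrix.mul_assoc, h, Matrix.neg_mul, Matrix.one_mul]
  have hGWx : (G * W)ᵀ *ᵥ x = 0 := by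
    rw [← neg_eq_zero, ← neg_mulVec, ← hWC, ← mulVec_mulVec, hx, mulVec_zero]
  have hPx : complProj U W *ᵥ x = 0 := by
    rwa [certificate, add_mulVec, ← mulVec_mulVec, hGWx, mulVec_zero, zero_add] at hx
  have hdecomp : x = U *ᵥ (Uᵀ *ᵥ x) + W *ᵥ (Wᵀ *ᵥ x) := by
    rwa [complProj, sub_mulVec, sub_mulVec, one_mulVec, ← mulVec_mulVec, ← mulVec_mulVec,
      sub_sub, sub_eq_zero] at hPx
  have hGWx' : (G * W)ᵀ *ᵥ x = (Wᵀ * G * W) *ᵥ (Wᵀ *ᵥ x) := by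
    conv_lhs => rw [hdecomp]
    rw [mulVec_add, mulVec_mulVec _ (G * W)ᵀ U, mulVec_mulVec _ (G * W)ᵀ W,
      hG.transpose_mul_mul_eq_zero hUGW, zero_mulVec, zero_add, transpose_mul, hG.eq]
  have hWx : Wᵀ *ᵥ x = 0 := by
    refine mulVec_injective_iff_isUnit.mpr hA.isUnit ?_
    rw [mulVec_zero, neg_mulVec, ← hGWx', hGWx, neg_zero]
  rw [hWx, mulVec_zero, add_zero] at hdecomp
  exact ⟨Uᵀ *ᵥ x, hdecomp.symm⟩

theorem exists_certificate_iff [DecidableEq κ₁] (hG : G.IsSymm) (hUU : Uᵀ * U = 1)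
    (hWW : Wᵀ * W = 1) (hUW : Uᵀ * W = 0) :
    (∃ C₁ C₂ : Matrix ι ι ℝ, C₁.IsSymm ∧ C₂.IsSymm ∧ G + C₁ = C₂ ∧ C₁ * U = 0 ∧
        C₁.PosSemidef ∧ C₁.rank = Fintype.card ι - Fintype.card κ₁ ∧ C₂ * W = 0) ↔
      Uᵀ * G * W = 0 ∧ (-(Wᵀ * G * W)).PosDef := by
  have hU := mulVec_injective_of_transpose_mul_self_eq_one hUU
  constructor
  · rintro ⟨C₁, C₂, -, -, hGC, hC₁U, hC₁, hrank, hC₂W⟩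
    exact blocks_of_certificate hU hWW hUW hC₁ hC₁U hrank hGC hC₂W
  · rintro ⟨hUGW, hA⟩
    have hC₁ := certificate_posSemidef hUU hWW hUW hA
    have hC₁U := certificate_mul_left hG hUGW hUU hUW
    have hC₁symm := isHermitian_iff_isSymm.mp hC₁.isHermitian
    have hker : LinearMap.ker (certificate G U W).mulVecLin = LinearMap.range U.mulVecLin :=
      le_antisymm (ker_certificate_le hG hUGW hWW hUW hA) (mul_eq_zero_iff_range_le_ker.mp hC₁U)
    exact ⟨_, _, hC₁symm, hG.add hC₁symm, rfl, hC₁U, hC₁,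
      (rank_eq_card_sub_iff_ker_eq hU hC₁U).mpr hker, add_certificate_mul_right hG hWW hUW hA⟩

end Certificate

section Coordinates

variable {n r p : ℕ}

def midBlock (h : r + p ≤ n) (b : Fin p) : Fin n := ⟨r + b, by omega⟩

theorem midBlock_injective (h : r + p ≤ n) : Function.Injective (midBlock h) :=
  fun a b hab => Fin.ext (by simpa [midBlock] using hab)

theorem range_midBlock (h : r + p ≤ n) :
    Set.range (midBlock h) = {i : Fin n | r ≤ i ∧ (i : ℕ) < r + p} := by
  ext i
  constructor
  · rintro ⟨b, rfl⟩
    simp [midBlock]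
  · rintro ⟨h1, h2⟩
    exact ⟨⟨i - r, by omega⟩, Fin.ext (show r + (i - r : ℕ) = i by omega)⟩

theorem range_unitCols_castLE (h : r ≤ n) :
    LinearMap.range (unitCols ℝ (Fin.castLE h)).mulVecLin =
      Submodule.span ℝ {x : Fin n → ℝ | ∀ i : Fin n, r ≤ (i : ℕ) → x i = 0} := by
  rw [range_unitCols (Fin.castLE_injective h), Fin.range_castLE]
  simp

theorem range_unitCols_midBlock (h : r + p ≤ n) :
    LinearMap.range (unitCols ℝ (midBlock h)).mulVecLin =
      Submodule.span ℝ
        {x : Fin n → ℝ | ∀ i : Fin n, ((i : ℕ) < r ∨ r + p ≤ (i : ℕ)) → x i = 0} := by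
  rw [range_unitCols (midBlock_injective h), range_midBlock]
  congr 1
  ext x
  refine forall_congr' fun i => imp_congr_left ?_
  simp only [Set.mem_ofPred_eq]
  omega

end Coordinates

end DualCertificate

open DualCertificate

/-- block characterization of the existence of a pair of dual
certificates `C1, C2` adapted to `X0` (with column space `span(e_1,…,e_{r0})`)
and `V` (with column space `span(e_{r0+1},…,e_{r0+p})`).  The adjoint `A^*`
of `A : S_n(ℝ) → ℝ^m` with respect to the trace inner product is carried as a
map `𝒜ad` with `∑ i, A(X)_i g_i = Tr(A^*(g) X)` for symmetric `X`. -/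
theorem dual_certificate_block_characterization
    (n m r0 p : ℕ) (hrp : r0 + p ≤ n)
    (𝒜ad : (Fin m → ℝ) →ₗ[ℝ] Matrix (Fin n) (Fin n) ℝ)
    (had_symm : ∀ g, (𝒜ad g).IsSymm)
    (X0 : Matrix (Fin n) (Fin n) ℝ)
    (hX0range : LinearMap.range X0.mulVecLin =
      Submodule.span ℝ {x : Fin n → ℝ | ∀ i : Fin n, r0 ≤ (i : ℕ) → x i = 0})
    (V : Matrix (Fin n) (Fin p) ℝ)
    (hVrange : LinearMap.range V.mulVecLin =
      Submodule.span ℝ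
        {x : Fin n → ℝ | ∀ i : Fin n, ((i : ℕ) < r0 ∨ r0 + p ≤ (i : ℕ)) → x i = 0}) :
    ∀ g1 : Fin m → ℝ,
      (∃ C1 C2 : Matrix (Fin n) (Fin n) ℝ, C1.IsSymm ∧ C2.IsSymm ∧
          𝒜ad g1 + C1 = C2 ∧ C1 * X0 = 0 ∧ C1.PosSemidef ∧
          C1.rank = n - r0 ∧ C2 * V = 0)
        ↔
      ((∀ i j : Fin n, (i : ℕ) < r0 → r0 ≤ (j : ℕ) → (j : ℕ) < r0 + p → 𝒜ad g1 i j = 0)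
        ∧ (-(Matrix.of fun a b : Fin p =>
            𝒜ad g1 ⟨r0 + a.val, by have := a.isLt; omega⟩
              ⟨r0 + b.val, by have := b.isLt; omega⟩)).PosDef) := by
  intro g1
  have hr0 : r0 ≤ n := by omega
  have hUW : (unitCols ℝ (Fin.castLE hr0))ᵀ * unitCols ℝ (midBlock hrp) = 0 :=
    transpose_unitCols_mul_unitCols_eq_zero fun a b =>
      Fin.ne_of_val_ne (show (a : ℕ) ≠ r0 + b by omega)
  have key := exists_certificate_iff (had_symm g1)
    (transpose_unitCols_mul_unitCols_self (Fin.castLE_injective hr0))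
    (transpose_unitCols_mul_unitCols_self (midBlock_injective hrp)) hUW
  have hUGW : (unitCols ℝ (Fin.castLE hr0))ᵀ * 𝒜ad g1 * unitCols ℝ (midBlock hrp) = 0 ↔
      ∀ i j : Fin n, (i : ℕ) < r0 → r0 ≤ (j : ℕ) → (j : ℕ) < r0 + p → 𝒜ad g1 i j = 0 := by
    rw [transpose_unitCols_mul_mul_unitCols, submatrix_eq_zero_iff, Fin.range_castLE,
      range_midBlock]
    simp only [Set.mem_ofPred_eq, and_imp]
    exact ⟨fun h i j hi => h i hi j, fun h i hi j => h i j hi⟩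
  rw [Fintype.card_fin, Fintype.card_fin, hUGW, transpose_unitCols_mul_mul_unitCols] at key
  simp only [mul_eq_zero_iff_of_range_eq (hX0range.trans (range_unitCols_castLE hr0).symm),
    mul_eq_zero_iff_of_range_eq (hVrange.trans (range_unitCols_midBlock hrp).symm)]
  exact key
end

section
/- (Boumal–Voroninski–Bandeira.) Let A : S_n(ℝ) → ℝ^m be linear, b ∈ ℝ^m, and suppose the set E_SDP = { X ∈ S_n(ℝ) : A(X) = b, X ⪰ 0 } is nonempty and compact, and that for every V in M_p = { V ∈ ℝ^{n×p} : A(VV^T) = b } the linear map V̇ ∈ ℝ^{n×p} ↦ A(V̇V^T + VV̇^T) ∈ ℝ^m is surjective. Assume p(p+1)/2 > m. Then, for Lebesgue-almost every cost matrix C ∈ S_n(ℝ), the following holds: every V ∈ M_p that is a second-order critical point of f_C(V) = Tr(C·VV^T) on M_p — i.e., every V ∈ M_p such that there exists g ∈ ℝ^m with (C − A^*(g))·V = 0 and ⟨C − A^*(g), V̇V̇^T⟩ ≥ 0 for all V̇ ∈ ℝ^{n×p} with A(V̇V^T + VV̇^T) = 0 — is a global minimizer of f_C over M_p. -/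
open Matrix MeasureTheory Set


/-- The range of a differentiable map from a lower-dimensional space is Lebesgue-null. -/
lemma null_range_of_differentiable
    {P E : Type*} [NormedAddCommGroup P] [NormedSpace ℝ P] [FiniteDimensional ℝ P]
    [NormedAddCommGroup E] [NormedSpace ℝ E] [FiniteDimensional ℝ E]
    [MeasurableSpace E] [BorelSpace E]
    (μ : Measure E) [μ.IsAddHaarMeasure]
    (hd : Module.finrank ℝ P < Module.finrank ℝ E)
    (φ : P → E) (hφ : Differentiable ℝ φ) : μ (Set.range φ) = 0 := by
  -- a surjective (non-injective) linear map `π : E → P`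
  obtain ⟨π, hπ⟩ : ∃ π : E →ₗ[ℝ] P, Function.Surjective π := by
    let bE := Module.finBasis ℝ E
    let bP := Module.finBasis ℝ P
    refine ⟨(bP.equivFun.symm.toLinearMap.comp
        (LinearMap.funLeft ℝ ℝ (Fin.castLE hd.le))).comp bE.equivFun.toLinearMap, ?_⟩
    exact bP.equivFun.symm.surjective.comp
      ((LinearMap.funLeft_surjective_of_injective ℝ ℝ _
        (Fin.castLE_injective hd.le)).comp bE.equivFun.surjective)
  have hπni : ¬ Function.Injective π := fun h =>
    absurd (LinearMap.finrank_le_finrank_of_injective h) (not_le.mpr hd)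
  obtain ⟨x₀, hx₀, hx₀ne⟩ : ∃ x₀ : E, π x₀ = 0 ∧ x₀ ≠ 0 := by
    rcases (LinearMap.ker π).ne_bot_iff.mp (fun h => hπni (LinearMap.ker_eq_bot.mp h)) with ⟨x, hx, hne⟩
    exact ⟨x, hx, hne⟩
  set f : E → E := φ ∘ π with hf
  set f' : E → E →L[ℝ] E := fun x => (fderiv ℝ φ (π x)).comp π.toContinuousLinearMap with hf'
  have hder : ∀ x ∈ (univ : Set E), HasFDerivWithinAt f (f' x) univ x := by
    intro x _
    exact (((hφ (π x)).hasFDerivAt.comp x π.toContinuousLinearMap.hasFDerivAt)).hasFDerivWithinAt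
  have hdet : ∀ x ∈ (univ : Set E), (f' x).det = 0 := by
    intro x _
    by_contra h
    have := (LinearMap.equivOfDetNeZero ((f' x) : E →ₗ[ℝ] E) h).injective
    have : Function.Injective (f' x) := this
    have : x₀ = 0 := by
      apply this
      simp [hf', hx₀]
    exact hx₀ne this
  have him : μ (f '' univ) = 0 :=
    addHaar_image_eq_zero_of_det_fderivWithin_eq_zero μ hder hdet
  have : Set.range φ = f '' univ := by
    rw [Set.image_univ, hf, Set.range_comp, hπ.range_eq, Set.image_univ]
  rwa [this]

lemma trace_mul_mul_transpose_self {n p : ℕ} (S : Matrix (Fin n) (Fin n) ℝ)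
    (W : Matrix (Fin n) (Fin p) ℝ) :
    Matrix.trace (S * (W * Wᵀ)) = ∑ j, (fun i => W i j) ⬝ᵥ (S *ᵥ fun i => W i j) := by
  rw [← Matrix.mul_assoc, Matrix.trace_mul_comm]
  simp only [Matrix.trace, Matrix.diag, Matrix.mul_apply, Matrix.transpose_apply,
    dotProduct, Matrix.mulVec]

lemma step1 {n m p : ℕ}
    (𝒜 : Matrix (Fin n) (Fin n) ℝ →ₗ[ℝ] (Fin m → ℝ)) (b : Fin m → ℝ)
    (𝒜ad : (Fin m → ℝ) →ₗ[ℝ] Matrix (Fin n) (Fin n) ℝ)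
    (hadj : ∀ (X : Matrix (Fin n) (Fin n) ℝ) (g : Fin m → ℝ), X.IsSymm →
      ∑ i, 𝒜 X i * g i = Matrix.trace (𝒜ad g * X))
    (C : Matrix (Fin n) (Fin n) ℝ)
    (V : Matrix (Fin n) (Fin p) ℝ) (hV : 𝒜 (V * Vᵀ) = b) (g : Fin m → ℝ)
    (h1 : (C - 𝒜ad g) * V = 0)
    (h2 : ∀ Vd : Matrix (Fin n) (Fin p) ℝ, 𝒜 (Vd * Vᵀ + V * Vdᵀ) = 0 →
      0 ≤ Matrix.trace ((C - 𝒜ad g) * (Vd * Vdᵀ)))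
    (z : Fin p → ℝ) (hz : z ≠ 0) (hVz : V *ᵥ z = 0) :
    ∀ V' : Matrix (Fin n) (Fin p) ℝ, 𝒜 (V' * V'ᵀ) = b →
      Matrix.trace (C * (V * Vᵀ)) ≤ Matrix.trace (C * (V' * V'ᵀ)) := by
  intro V' hV'
  set S : Matrix (Fin n) (Fin n) ℝ := C - 𝒜ad g with hS
  have hpsd : ∀ w : Fin n → ℝ, 0 ≤ w ⬝ᵥ (S *ᵥ w) := by
    intro w
    set Vd : Matrix (Fin n) (Fin p) ℝ := Matrix.of fun i j => w i * z j with hVd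
    have hVdV : Vd * Vᵀ = 0 := by
      ext i j
      simp only [Matrix.mul_apply, Matrix.transpose_apply, Matrix.zero_apply, hVd,
        Matrix.of_apply]
      have : ∑ k, w i * z k * V j k = w i * (V *ᵥ z) j := by
        simp only [Matrix.mulVec, dotProduct, Finset.mul_sum]
        refine Finset.sum_congr rfl fun k _ => ?_; ring
      rw [this, hVz]; simp
    have hVVd : V * Vdᵀ = 0 := by
      ext i j
      simp only [Matrix.mul_apply, Matrix.transpose_apply, Matrix.zero_apply, hVd,
        Matrix.of_apply]
      have : ∑ k, V i k * (w j * z k) = w j * (V *ᵥ z) i := by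
        simp only [Matrix.mulVec, dotProduct, Finset.mul_sum]
        refine Finset.sum_congr rfl fun k _ => ?_; ring
      rw [this, hVz]; simp
    have h0 : 𝒜 (Vd * Vᵀ + V * Vdᵀ) = 0 := by rw [hVdV, hVVd, add_zero, map_zero]
    have hineq := h2 Vd h0
    have hVdVd : Vd * Vdᵀ = (z ⬝ᵥ z) • Matrix.of fun i j => w i * w j := by
      ext i j
      simp only [Matrix.mul_apply, Matrix.transpose_apply, hVd, Matrix.of_apply,
        Matrix.smul_apply, smul_eq_mul, dotProduct]
      rw [Finset.sum_mul]
      refine Finset.sum_congr rfl fun k _ => ?_; ring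
    rw [hVdVd] at hineq
    have htr : Matrix.trace (S * ((z ⬝ᵥ z) • Matrix.of fun i j => w i * w j))
        = (z ⬝ᵥ z) * (w ⬝ᵥ (S *ᵥ w)) := by
      rw [Matrix.mul_smul, Matrix.trace_smul]
      simp only [smul_eq_mul]
      congr 1
      simp only [Matrix.trace, Matrix.diag, Matrix.mul_apply, Matrix.of_apply,
        dotProduct, Matrix.mulVec, Finset.mul_sum]
      refine Finset.sum_congr rfl fun i _ => Finset.sum_congr rfl fun k _ => ?_
      ring
    rw [htr] at hineq
    have hzz : 0 < z ⬝ᵥ z := by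
      rcases lt_or_eq_of_le (Finset.sum_nonneg fun i _ => mul_self_nonneg (z i) : (0:ℝ) ≤ ∑ i, z i * z i) with h | h
      · exact h
      · exact absurd (dotProduct_self_eq_zero.mp h.symm) hz
    nlinarith
  -- trace of S against a Gram matrix is nonnegative
  have htrS : ∀ W : Matrix (Fin n) (Fin p) ℝ, 0 ≤ Matrix.trace (S * (W * Wᵀ)) := by
    intro W
    rw [trace_mul_mul_transpose_self]
    exact Finset.sum_nonneg fun j _ => hpsd _
  -- adjoint pieces agree on the two feasible points
  have hsymmV : (V * Vᵀ).IsSymm := by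
    unfold Matrix.IsSymm
    rw [Matrix.transpose_mul, Matrix.transpose_transpose]
  have hsymmV' : (V' * V'ᵀ).IsSymm := by
    unfold Matrix.IsSymm
    rw [Matrix.transpose_mul, Matrix.transpose_transpose]
  have hadV : Matrix.trace (𝒜ad g * (V * Vᵀ)) = ∑ i, b i * g i := by
    rw [← hadj _ _ hsymmV, hV]
  have hadV' : Matrix.trace (𝒜ad g * (V' * V'ᵀ)) = ∑ i, b i * g i := by
    rw [← hadj _ _ hsymmV', hV']
  have hCdecomp : ∀ X : Matrix (Fin n) (Fin n) ℝ,
      Matrix.trace (C * X) = Matrix.trace (S * X) + Matrix.trace (𝒜ad g * X) := by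
    intro X
    rw [hS, Matrix.sub_mul, Matrix.trace_sub]
    ring
  have hSV : Matrix.trace (S * (V * Vᵀ)) = 0 := by
    rw [← Matrix.mul_assoc, h1, Matrix.zero_mul, Matrix.trace_zero]
  rw [hCdecomp, hCdecomp, hSV, hadV, hadV']
  have := htrS V'
  linarith

/-- Block identity: a symmetric matrix `S` (in `⊕`-coordinates) annihilating
`fromRows 1 B` is determined by its lower-right block. -/
lemma block_identity {p q : ℕ} (S : Matrix (Fin p ⊕ Fin q) (Fin p ⊕ Fin q) ℝ)
    (hsym : Sᵀ = S) (B : Matrix (Fin q) (Fin p) ℝ)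
    (h : S * Matrix.fromRows (1 : Matrix (Fin p) (Fin p) ℝ) B = 0) :
    S = (Matrix.fromCols (-B) (1 : Matrix (Fin q) (Fin q) ℝ))ᵀ * S.toBlocks₂₂ *
      Matrix.fromCols (-B) 1 := by
  set S11 := S.toBlocks₁₁
  set S12 := S.toBlocks₁₂
  set S21 := S.toBlocks₂₁
  set S22 := S.toBlocks₂₂
  have hSb : S = Matrix.fromBlocks S11 S12 S21 S22 := (Matrix.fromBlocks_toBlocks S).symm
  rw [hSb, Matrix.fromBlocks_mul_fromRows] at h
  rw [show (0 : Matrix (Fin p ⊕ Fin q) (Fin p) ℝ) = Matrix.fromRows 0 0 from Matrix.fromRows_zero.symm, Matrix.fromRows_ext_iff] at h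
  obtain ⟨h1, h2⟩ : S11 * 1 + S12 * B = 0 ∧ S21 * 1 + S22 * B = 0 := h
  rw [Matrix.mul_one] at h1 h2
  have hsym' : Matrix.fromBlocks S11ᵀ S21ᵀ S12ᵀ S22ᵀ = Matrix.fromBlocks S11 S12 S21 S22 := by
    rw [← Matrix.fromBlocks_transpose, ← hSb, hsym, hSb]
  have h12 : S12 = S21ᵀ := by
    have := congrArg Matrix.toBlocks₁₂ hsym'
    simpa [Matrix.toBlocks_fromBlocks₁₂] using this.symm
  have h22 : S22ᵀ = S22 := by
    have := congrArg Matrix.toBlocks₂₂ hsym'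
    simpa [Matrix.toBlocks_fromBlocks₂₂] using this
  have e21 : S21 = -(S22 * B) := by rwa [add_eq_zero_iff_eq_neg] at h2
  have e12 : S12 = -(Bᵀ * S22) := by
    rw [h12, e21, Matrix.transpose_neg, Matrix.transpose_mul, h22]
  have e11 : S11 = Bᵀ * S22 * B := by
    have : S11 = -(S12 * B) := by rwa [add_eq_zero_iff_eq_neg] at h1
    rw [this, e12]
    simp [Matrix.neg_mul, Matrix.mul_assoc]
  rw [Matrix.transpose_fromCols, Matrix.transpose_neg, Matrix.transpose_one,
    Matrix.fromRows_mul, Matrix.fromRows_mul_fromCols]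
  rw [hSb, e11, e12, e21]
  simp [Matrix.neg_mul, Matrix.mul_neg, Matrix.mul_assoc]

abbrev BMParams (p q m n : ℕ) : Type :=
  ((Fin q × Fin p) → ℝ) × (Fin m → ℝ) × (Sym2 (Fin q) → ℝ) ×
    ({s : Sym2 (Fin n) // ¬ s.IsDiag} → ℝ)

noncomputable def BMRow {p q n : ℕ} (τ : (Fin p ⊕ Fin q) ≃ Fin n)
    (β : (Fin q × Fin p) → ℝ) : Matrix (Fin q) (Fin n) ℝ :=
  Matrix.of fun c j =>
    Sum.elim (fun a => -β (c, a)) (fun d => if c = d then (1:ℝ) else 0) (τ.symm j)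

noncomputable def BMT {q : ℕ} (t : Sym2 (Fin q) → ℝ) : Matrix (Fin q) (Fin q) ℝ :=
  Matrix.of fun c d => t s(c, d)

noncomputable def BMK {n : ℕ} (k : {s : Sym2 (Fin n) // ¬ s.IsDiag} → ℝ) :
    Fin n → Fin n → ℝ := fun i j =>
  if h : i = j then 0
  else (if i < j then 1 else -1) * k ⟨s(i, j), fun hd => h (Sym2.mk_isDiag_iff.mp hd)⟩

noncomputable def BMchart {p q m n : ℕ}
    (𝒜ad : (Fin m → ℝ) →ₗ[ℝ] Matrix (Fin n) (Fin n) ℝ)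
    (τ : (Fin p ⊕ Fin q) ≃ Fin n) : BMParams p q m n → (Fin n → Fin n → ℝ) :=
  fun x i j =>
    (𝒜ad x.2.1 i j + ((BMRow τ x.1)ᵀ * BMT x.2.2.1 * BMRow τ x.1) i j) / 2
      + BMK x.2.2.2 i j

lemma BMchart_covers {p q m n : ℕ}
    (𝒜ad : (Fin m → ℝ) →ₗ[ℝ] Matrix (Fin n) (Fin n) ℝ)
    (had_symm : ∀ g, (𝒜ad g).IsSymm)
    (M : Fin n → Fin n → ℝ) (g : Fin m → ℝ)
    (τ : (Fin p ⊕ Fin q) ≃ Fin n)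
    (W : Matrix (Fin n) (Fin p) ℝ)
    (hW1 : ∀ a a', W (τ (Sum.inl a)) a' = (1 : Matrix (Fin p) (Fin p) ℝ) a a')
    (hSW : (Matrix.of M + (Matrix.of M)ᵀ - 𝒜ad g) * W = 0) :
    ∃ x : BMParams p q m n, BMchart 𝒜ad τ x = M := by
  classical
  set C : Matrix (Fin n) (Fin n) ℝ := Matrix.of M + (Matrix.of M)ᵀ with hC
  set S : Matrix (Fin n) (Fin n) ℝ := C - 𝒜ad g with hSdef
  have hCsym : Cᵀ = C := by
    rw [hC, Matrix.transpose_add, Matrix.transpose_transpose, add_comm]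
  have hSsym : Sᵀ = S := by
    rw [hSdef, Matrix.transpose_sub, hCsym, (had_symm g)]
  set Shat : Matrix (Fin p ⊕ Fin q) (Fin p ⊕ Fin q) ℝ := S.submatrix (⇑τ) (⇑τ) with hShat
  have hShatsym : Shatᵀ = Shat := by rw [hShat, Matrix.transpose_submatrix, hSsym]
  set B : Matrix (Fin q) (Fin p) ℝ := Matrix.of fun c a => W (τ (Sum.inr c)) a with hB
  have hWhat : W.submatrix (⇑τ) id = Matrix.fromRows (1 : Matrix (Fin p) (Fin p) ℝ) B := by
    ext u a
    cases u with
    | inl a' => simp [Matrix.submatrix_apply, hW1]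
    | inr c => simp [Matrix.submatrix_apply, hB]
  have hmul : Shat * Matrix.fromRows (1 : Matrix (Fin p) (Fin p) ℝ) B = 0 := by
    rw [← hWhat, hShat, Matrix.submatrix_mul_equiv S W (⇑τ) τ id, hSW]
    simp
  have hkey : Shat = (Matrix.fromCols (-B) (1 : Matrix (Fin q) (Fin q) ℝ))ᵀ *
      Shat.toBlocks₂₂ * Matrix.fromCols (-B) 1 :=
    block_identity Shat hShatsym B hmul
  refine ⟨⟨fun ca => B ca.1 ca.2, g,
    Sym2.lift ⟨fun c d => S (τ (Sum.inr c)) (τ (Sum.inr d)), ?_⟩,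
    fun s => Sym2.lift ⟨fun i j =>
      if i < j then (M i j - M j i)/2 else (M j i - M i j)/2, ?_⟩ s.1⟩, ?_⟩
  · intro c d
    conv_lhs => rw [← hSsym]
    rfl
  · intro i j
    rcases lt_trichotomy i j with h | h | h
    · simp [h, not_lt.mpr h.le]
    · simp [h]
    · simp [h, not_lt.mpr h.le]
  · funext i j
    have hR : BMRow τ (fun ca => B ca.1 ca.2)
        = (Matrix.fromCols (-B) (1 : Matrix (Fin q) (Fin q) ℝ)).submatrix id (⇑τ.symm) := by
      ext c j'
      simp only [BMRow, Matrix.of_apply, Matrix.submatrix_apply, id_eq]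
      cases h : τ.symm j' with
      | inl a => simp [Matrix.fromCols_apply_inl]
      | inr d => simp [Matrix.fromCols_apply_inr, Matrix.one_apply]
    have hT : BMT (Sym2.lift ⟨fun c d => S (τ (Sum.inr c)) (τ (Sum.inr d)), by
        intro c d
        conv_lhs => rw [← hSsym]
        rfl⟩) = Shat.toBlocks₂₂ := by
      ext c d
      simp [BMT, Matrix.toBlocks₂₂, hShat]
    have hRTR : (BMRow τ (fun ca => B ca.1 ca.2))ᵀ *
        BMT (Sym2.lift ⟨fun c d => S (τ (Sum.inr c)) (τ (Sum.inr d)), by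
          intro c d
          conv_lhs => rw [← hSsym]
          rfl⟩) * BMRow τ (fun ca => B ca.1 ca.2) = S := by
      rw [hR, hT, Matrix.transpose_submatrix]
      have e1 : ((Matrix.fromCols (-B) (1 : Matrix (Fin q) (Fin q) ℝ))ᵀ).submatrix (⇑τ.symm) id
          * Shat.toBlocks₂₂
          = (((Matrix.fromCols (-B) 1)ᵀ) * Shat.toBlocks₂₂).submatrix (⇑τ.symm) id := by
        have := Matrix.submatrix_mul_equiv ((Matrix.fromCols (-B) (1 : Matrix (Fin q) (Fin q) ℝ))ᵀ)
          Shat.toBlocks₂₂ (⇑τ.symm) (Equiv.refl (Fin q)) id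
        simpa using this
      have e2 : (((Matrix.fromCols (-B) (1 : Matrix (Fin q) (Fin q) ℝ))ᵀ) * Shat.toBlocks₂₂).submatrix (⇑τ.symm) id
          * (Matrix.fromCols (-B) 1).submatrix id (⇑τ.symm)
          = (((Matrix.fromCols (-B) 1)ᵀ) * Shat.toBlocks₂₂ * Matrix.fromCols (-B) 1).submatrix (⇑τ.symm) (⇑τ.symm) := by
        have := Matrix.submatrix_mul_equiv
          ((((Matrix.fromCols (-B) (1 : Matrix (Fin q) (Fin q) ℝ))ᵀ) * Shat.toBlocks₂₂))
          (Matrix.fromCols (-B) 1) (⇑τ.symm) (Equiv.refl (Fin q)) (⇑τ.symm)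
        simpa using this
      rw [e1, e2, ← hkey, hShat, Matrix.submatrix_submatrix, Equiv.self_comp_symm,
        Matrix.submatrix_id_id]
    rw [BMchart]
    simp only [hRTR]
    have hCij : 𝒜ad g i j + S i j = M i j + M j i := by
      simp [hSdef, hC, Matrix.sub_apply, Matrix.add_apply, Matrix.transpose_apply]
    rw [hCij]
    rcases lt_trichotomy i j with h | h | h
    · rw [BMK]
      rw [dif_neg (ne_of_lt h)]
      simp only [Sym2.lift_mk, if_pos h]
      ring
    · rw [BMK, dif_pos h, h]
      ring
    · rw [BMK, dif_neg (ne_of_gt h)]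
      simp only [Sym2.lift_mk, if_neg (lt_asymm h)]
      ring

lemma BMchart_differentiable {p q m n : ℕ}
    (𝒜ad : (Fin m → ℝ) →ₗ[ℝ] Matrix (Fin n) (Fin n) ℝ)
    (τ : (Fin p ⊕ Fin q) ≃ Fin n) :
    Differentiable ℝ (BMchart 𝒜ad τ) := by
  have hatomβ : ∀ y : Fin q × Fin p,
      Differentiable ℝ fun x : BMParams p q m n => x.1 y :=
    fun y => differentiable_pi.mp differentiable_fst y
  have hatomt : ∀ z : Sym2 (Fin q),
      Differentiable ℝ fun x : BMParams p q m n => x.2.2.1 z :=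
    fun z => differentiable_pi.mp (differentiable_snd.snd.fst) z
  have hatomk : ∀ z : {s : Sym2 (Fin n) // ¬ s.IsDiag},
      Differentiable ℝ fun x : BMParams p q m n => x.2.2.2 z :=
    fun z => differentiable_pi.mp (differentiable_snd.snd.snd) z
  have hrow : ∀ (c : Fin q) (j' : Fin n),
      Differentiable ℝ fun x : BMParams p q m n => BMRow τ x.1 c j' := by
    intro c j'
    simp only [BMRow, Matrix.of_apply]
    cases h : τ.symm j' with
    | inl a => simp only [h, Sum.elim_inl]; exact (hatomβ (c, a)).neg
    | inr d => simp only [h, Sum.elim_inr]; exact differentiable_const _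
  have hA : ∀ i j : Fin n,
      Differentiable ℝ fun x : BMParams p q m n => 𝒜ad x.2.1 i j := by
    intro i j
    let l : (Fin m → ℝ) →ₗ[ℝ] ℝ :=
      { toFun := fun v => 𝒜ad v i j
        map_add' := by intro u v; simp [Matrix.add_apply]
        map_smul' := by intro c v; simp [Matrix.smul_apply] }
    have hl : Differentiable ℝ l := l.toContinuousLinearMap.differentiable
    exact hl.comp (differentiable_snd.fst)
  apply differentiable_pi.mpr; intro i
  apply differentiable_pi.mpr; intro j
  simp only [BMchart]
  have hS : Differentiable ℝ fun x : BMParams p q m n =>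
      ((BMRow τ x.1)ᵀ * BMT x.2.2.1 * BMRow τ x.1) i j := by
    simp only [Matrix.mul_apply, Matrix.transpose_apply, BMT, Matrix.of_apply]
    exact Differentiable.fun_sum fun k _ =>
      (Differentiable.fun_sum fun c _ => (hrow c i).mul (hatomt s(c, k))).mul (hrow k j)
  have hK : Differentiable ℝ fun x : BMParams p q m n => BMK x.2.2.2 i j := by
    by_cases h : i = j
    · simp only [BMK, dif_pos h]; exact differentiable_const _
    · simp only [BMK, dif_neg h]
      exact ((hatomk _).const_mul _)
  have h12 : Differentiable ℝ fun x : BMParams p q m n =>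
      (𝒜ad x.2.1 i j + ((BMRow τ x.1)ᵀ * BMT x.2.2.1 * BMRow τ x.1) i j) / 2 :=
    by simp only [div_eq_inv_mul]; exact ((hA i j).add hS).const_mul _
  exact h12.add hK

lemma two_mul_choose_two : ∀ k : ℕ, 2 * Nat.choose k 2 = k * (k - 1) := by
  intro k
  induction k with
  | zero => rfl
  | succ k ih =>
    rw [Nat.choose_succ_succ, Nat.mul_add, ih]
    cases k with
    | zero => rfl
    | succ k' =>
      simp only [Nat.succ_sub_one, Nat.choose_one_right]
      ring

lemma BMchart_range_null {p q m n : ℕ} (hpm : m < p * (p + 1) / 2)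
    (𝒜ad : (Fin m → ℝ) →ₗ[ℝ] Matrix (Fin n) (Fin n) ℝ)
    (τ : (Fin p ⊕ Fin q) ≃ Fin n) :
    volume (Set.range (BMchart 𝒜ad τ)) = 0 := by
  apply null_range_of_differentiable _ _ _ (BMchart_differentiable 𝒜ad τ)
  -- compute the finrank of the parameter space
  have hn : p + q = n := by
    have := Fintype.card_congr τ
    simpa [Fintype.card_sum] using this
  have hrankE : Module.finrank ℝ (Fin n → Fin n → ℝ) = n * n := by
    rw [Module.finrank_pi_fintype]
    simp [Module.finrank_fintype_fun_eq_card]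
  have hrankP : Module.finrank ℝ (BMParams p q m n)
      = q * p + (m + ((q + 1).choose 2 + n.choose 2)) := by
    rw [Module.finrank_prod, Module.finrank_prod, Module.finrank_prod]
    rw [Module.finrank_fintype_fun_eq_card, Module.finrank_fintype_fun_eq_card,
      Module.finrank_fintype_fun_eq_card, Module.finrank_fintype_fun_eq_card]
    rw [Fintype.card_prod, Fintype.card_fin, Fintype.card_fin, Fintype.card_fin]
    rw [Sym2.card, Sym2.card_subtype_not_diag]
    simp [Fintype.card_fin]
  rw [hrankE, hrankP]
  -- arithmetic
  have hp1 : 0 < p := by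
    by_contra hp0
    interval_cases p
    simp at hpm
  obtain ⟨p0, rfl⟩ : ∃ p0, p = p0 + 1 := ⟨p - 1, by omega⟩
  have e1 : 2 * ((q + 1).choose 2) = (q + 1) * q := by
    rw [two_mul_choose_two]; simp
  have e2 : 2 * (n.choose 2) = n * (n - 1) := two_mul_choose_two n
  have e2' : 2 * (n.choose 2) = (p0 + 1 + q) * (p0 + q) := by
    rw [e2, ← hn]; congr 1; omega
  have hm : 2 * m + 2 ≤ (p0 + 1) * (p0 + 2) := by
    have h2 : 2 * ((p0 + 1) * (p0 + 2) / 2) = (p0 + 1) * (p0 + 2) := by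
      apply Nat.two_mul_div_two_of_even
      rcases Nat.even_or_odd p0 with h | h
      · obtain ⟨c, rfl⟩ := h; exact ⟨(2*c+1)*(c+1), by ring⟩
      · obtain ⟨c, rfl⟩ := h; exact ⟨(c+1)*(2*c+3), by ring⟩
    have hpm' : m < (p0 + 1) * (p0 + 2) / 2 := by
      have he : (p0 + 1) * (p0 + 1 + 1) = (p0 + 1) * (p0 + 2) := by ring
      rwa [he] at hpm
    omega
  subst hn
  nlinarith [e1, e2', hm]

/-- If `V` has independent columns, some `p` rows of `V` form an invertible
matrix; renormalizing gives `W = V * U` whose selected rows are the identity. -/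
lemma exists_good_rows {n p : ℕ} (V : Matrix (Fin n) (Fin p) ℝ)
    (hinj : Function.Injective V.mulVec) :
    ∃ (τ : (Fin p ⊕ Fin (n - p)) ≃ Fin n) (U : Matrix (Fin p) (Fin p) ℝ),
      ∀ a a', (V * U) (τ (Sum.inl a)) a' = (1 : Matrix (Fin p) (Fin p) ℝ) a a' := by
  classical
  have hrank : V.rank = p := by
    have hinj' : Function.Injective V.mulVecLin := by
      rw [Matrix.coe_mulVecLin]; exact hinj
    rw [Matrix.rank, LinearMap.finrank_range_of_inj hinj',
      Module.finrank_fintype_fun_eq_card, Fintype.card_fin]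
  have hspan : Submodule.span ℝ (Set.range V) = ⊤ := by
    apply Submodule.eq_top_of_finrank_eq
    change Module.finrank ℝ (Submodule.span ℝ (Set.range V.row)) = _
    rw [← Matrix.rank_eq_finrank_span_row, hrank,
      Module.finrank_fintype_fun_eq_card, Fintype.card_fin]
  obtain ⟨bset, hbs, hbspan, hbli⟩ := exists_linearIndependent ℝ (Set.range V)
  haveI : Fintype bset := ((Set.finite_range V).subset hbs).fintype
  have hbtop : ⊤ ≤ Submodule.span ℝ (Set.range ((↑) : bset → (Fin p → ℝ))) := by
    rw [Subtype.range_coe, hbspan, hspan]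
  let bas : Module.Basis bset ℝ (Fin p → ℝ) := Module.Basis.mk hbli hbtop
  have hcard : Fintype.card bset = p := by
    have := Module.finrank_eq_card_basis bas
    rw [Module.finrank_fintype_fun_eq_card, Fintype.card_fin] at this
    omega
  let ε : Fin p ≃ bset := (Fintype.equivFinOfCardEq hcard).symm
  have hex : ∀ y : bset, ∃ i : Fin n, V i = (y : Fin p → ℝ) := fun y => hbs y.2
  choose e0 he0 using hex
  set e : Fin p → Fin n := fun a => e0 (ε a) with he
  have heV : ∀ a, V (e a) = ((ε a : bset) : Fin p → ℝ) := fun a => he0 (ε a)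
  have heinj : Function.Injective e := by
    intro a a' h
    have : ((ε a : bset) : Fin p → ℝ) = ((ε a' : bset) : Fin p → ℝ) := by
      rw [← heV, ← heV, h]
    exact ε.injective (Subtype.ext this)
  have hunit : IsUnit (V.submatrix e id) := by
    rw [← Matrix.linearIndependent_rows_iff_isUnit]
    have hre : (fun a => V.submatrix e id a) = (((↑) : bset → (Fin p → ℝ)) ∘ ε) := by
      funext a
      funext j'
      simp only [Matrix.submatrix_apply, id_eq, Function.comp_apply]
      rw [heV]
    change LinearIndependent ℝ (fun a => V.submatrix e id a)
    rw [hre]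
    exact hbli.comp ε ε.injective
  have hcardc : Fintype.card {x : Fin n // x ∉ Set.range e} = n - p := by
    have h0 : Fintype.card (Set.range e) = p := by
      rw [Set.card_range_of_injective heinj, Fintype.card_fin]
    have h1 : Fintype.card {x : Fin n // x ∈ Set.range e} = p := by
      exact (Fintype.card_congr (Equiv.refl _)).trans h0
    have := Fintype.card_subtype_compl (fun x : Fin n => x ∈ Set.range e)
    rw [this, h1, Fintype.card_fin]
  let ε' : Fin (n - p) ≃ {x : Fin n // x ∉ Set.range e} :=
    (Fintype.equivFinOfCardEq hcardc).symm
  let τ : (Fin p ⊕ Fin (n - p)) ≃ Fin n :=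
    (Equiv.sumCongr (Equiv.ofInjective e heinj) ε').trans
      (Equiv.sumCompl (· ∈ Set.range e))
  have hτ : ∀ a, τ (Sum.inl a) = e a := by
    intro a
    simp [τ, Equiv.sumCompl, Equiv.ofInjective]
  refine ⟨τ, (V.submatrix e id)⁻¹, ?_⟩
  intro a a'
  have hdet : IsUnit (V.submatrix e id).det := by
    rwa [← Matrix.isUnit_iff_isUnit_det]
  have hmm : (V * (V.submatrix e id)⁻¹) (e a) a'
      = ((V.submatrix e id) * (V.submatrix e id)⁻¹) a a' := by
    simp [Matrix.mul_apply, Matrix.submatrix_apply]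
  rw [hτ, hmm, Matrix.mul_nonsing_inv _ hdet]
/-- Boumal–Voroninski–Bandeira: if `E_SDP` is nonempty and
compact, the factorization map is a submersion at every point of `M_p`, and
`p(p+1)/2 > m`, then for (Lebesgue-)almost every symmetric cost matrix — every
symmetric matrix arises as `C = M + Mᵀ` and Lebesgue measure on `S_n(ℝ)` is
the pushforward of the Lebesgue measure on matrices under `M ↦ M + Mᵀ` —
every second-order critical point of `f_C(V) = Tr(C V Vᵀ)` on `M_p` is a
global minimizer. -/
theorem burer_monteiro_no_spurious_critical_points
    (n m p : ℕ)
    (𝒜 : Matrix (Fin n) (Fin n) ℝ →ₗ[ℝ] (Fin m → ℝ)) (b : Fin m → ℝ)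
    (𝒜ad : (Fin m → ℝ) →ₗ[ℝ] Matrix (Fin n) (Fin n) ℝ)
    (had_symm : ∀ g, (𝒜ad g).IsSymm)
    (hadj : ∀ (X : Matrix (Fin n) (Fin n) ℝ) (g : Fin m → ℝ), X.IsSymm →
      ∑ i, 𝒜 X i * g i = Matrix.trace (𝒜ad g * X))
    (hne : ∃ X : Matrix (Fin n) (Fin n) ℝ, 𝒜 X = b ∧ X.PosSemidef)
    (hcpt : IsCompact {X : Matrix (Fin n) (Fin n) ℝ | 𝒜 X = b ∧ X.PosSemidef})
    (hsubmersion : ∀ V : Matrix (Fin n) (Fin p) ℝ, 𝒜 (V * Vᵀ) = b →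
      Function.Surjective fun Vd : Matrix (Fin n) (Fin p) ℝ => 𝒜 (Vd * Vᵀ + V * Vdᵀ))
    (hpm : m < p * (p + 1) / 2) :
    ∀ᵐ M ∂(volume : Measure (Fin n → Fin n → ℝ)),
      ∀ V : Matrix (Fin n) (Fin p) ℝ, 𝒜 (V * Vᵀ) = b →
        (∃ g : Fin m → ℝ,
          (Matrix.of M + (Matrix.of M)ᵀ - 𝒜ad g) * V = 0 ∧
          ∀ Vd : Matrix (Fin n) (Fin p) ℝ, 𝒜 (Vd * Vᵀ + V * Vdᵀ) = 0 →
            0 ≤ Matrix.trace ((Matrix.of M + (Matrix.of M)ᵀ - 𝒜ad g) * (Vd * Vdᵀ))) →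
        ∀ V' : Matrix (Fin n) (Fin p) ℝ, 𝒜 (V' * V'ᵀ) = b →
          Matrix.trace ((Matrix.of M + (Matrix.of M)ᵀ) * (V * Vᵀ)) ≤
            Matrix.trace ((Matrix.of M + (Matrix.of M)ᵀ) * (V' * V'ᵀ)) := by
  classical
  have hBadnull : volume (⋃ τ : (Fin p ⊕ Fin (n - p)) ≃ Fin n,
      Set.range (BMchart 𝒜ad τ)) = 0 :=
    measure_iUnion_null fun τ => BMchart_range_null hpm 𝒜ad τ
  filter_upwards [measure_eq_zero_iff_ae_notMem.mp hBadnull] with M hM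
  intro V hV hcrit V' hV'
  obtain ⟨g, hg1, hg2⟩ := hcrit
  by_cases hinj : Function.Injective V.mulVec
  · exfalso
    obtain ⟨τ, U, hW1⟩ := exists_good_rows V hinj
    have hSW : (Matrix.of M + (Matrix.of M)ᵀ - 𝒜ad g) * (V * U) = 0 := by
      rw [← Matrix.mul_assoc, hg1, Matrix.zero_mul]
    obtain ⟨x, hx⟩ := BMchart_covers 𝒜ad had_symm M g τ (V * U) hW1 hSW
    exact hM (Set.mem_iUnion.mpr ⟨τ, ⟨x, hx⟩⟩)
  · rw [Function.not_injective_iff] at hinj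
    obtain ⟨z1, z2, hz12, hzne⟩ := hinj
    have hVz : V *ᵥ (z1 - z2) = 0 := by
      rw [Matrix.mulVec_sub, hz12, sub_self]
    exact step1 𝒜 b 𝒜ad hadj (Matrix.of M + (Matrix.of M)ᵀ) V hV g hg1 hg2
      (z1 - z2) (sub_ne_zero.mpr hzne) hVz V' hV'
end

section
/- Let A : S_n(ℝ) → ℝ^m be linear, b ∈ ℝ^m, E_SDP = { X ∈ S_n(ℝ) : A(X) = b, X ⪰ 0 } nonempty and compact, and M_p = { V ∈ ℝ^{n×p} : A(VV^T) = b }. Let C ∈ S_n(ℝ) be any cost matrix, and let V_* ∈ M_p with rank(V_*) < p. If there exists g ∈ ℝ^m such that (C − A^*(g))·V_* = 0 and ⟨C − A^*(g), V̇V̇^T⟩ ≥ 0 for all V̇ ∈ ℝ^{n×p} with A(V̇V_*^T + V_*V̇^T) = 0, then V_* is a global minimizer of f_C(V) = Tr(C·VV^T) over M_p (equivalently, X = V_*V_*^T minimizes Tr(CX) over E_SDP). -/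
/-!
The multiplier `g` makes `S = C - 𝒜* g` a dual certificate. A kernel vector `z ≠ 0` of `V_*`
exists because `rank V_* < p`, and for every `u` the direction `V̇ = u zᵀ` satisfies
`V̇ V_*ᵀ = 0`, so it is tangent and the second-order condition gives
`0 ≤ ⟨S, V̇ V̇ᵀ⟩ = ‖z‖² uᵀ S u`; hence `S ⪰ 0`. For feasible `X ⪰ 0`, weak duality then reads
`Tr(C X) = ⟨S, X⟩ + ⟨g, b⟩ ≥ ⟨g, b⟩ = Tr(C V_* V_*ᵀ)`, using `S V_* = 0`.
-/

open Matrix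

namespace Matrix

theorem exists_mulVec_eq_zero_of_rank_lt {K m n : Type*} [Field K] [Fintype m] [Fintype n]
    (A : Matrix m n K) (h : A.rank < Fintype.card n) : ∃ v ≠ 0, A *ᵥ v = 0 := by
  by_contra! hA
  have hinj : Function.Injective A.mulVecLin :=
    LinearMap.ker_eq_bot.mp <|
      ker_mulVecLin_eq_bot_iff.mpr fun v hv => by_contra fun h0 => hA v h0 hv
  have hrank : A.rank = Fintype.card n := by
    rw [rank, LinearMap.finrank_range_of_inj hinj, Module.finrank_fintype_fun_eq_card]
  omega

theorem trace_mul_vecMulVec {R n : Type*} [CommSemiring R] [Fintype n]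
    (S : Matrix n n R) (x y : n → R) : trace (S * vecMulVec x y) = y ⬝ᵥ S *ᵥ x := by
  rw [mul_vecMulVec, trace_vecMulVec, dotProduct_comm]

theorem trace_mul_nonneg_of_posSemidef {n : Type*} [Fintype n] {S X : Matrix n n ℝ}
    (hS : ∀ u, 0 ≤ u ⬝ᵥ S *ᵥ u) (hX : X.PosSemidef) : 0 ≤ trace (S * X) := by
  obtain ⟨k, v, rfl⟩ := posSemidef_iff_eq_sum_vecMulVec.mp hX
  simp only [Finset.mul_sum, trace_sum, star_trivial, trace_mul_vecMulVec]
  exact Finset.sum_nonneg fun i _ => hS (v i)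

end Matrix

theorem dotProduct_mulVec_nonneg_of_trace_mul_self_nonneg {R n p : Type*} [Field R]
    [LinearOrder R] [IsStrictOrderedRing R] [Fintype n] [Fintype p] {S : Matrix n n R}
    {V : Matrix n p R} {z : p → R} (hz : z ≠ 0) (hVz : V *ᵥ z = 0)
    (hS : ∀ W : Matrix n p R, W * Vᵀ = 0 → 0 ≤ trace (S * (W * Wᵀ))) (u : n → R) :
    0 ≤ u ⬝ᵥ S *ᵥ u := by
  have htangent : vecMulVec u z * Vᵀ = 0 := by
    rw [vecMulVec_mul, vecMul_transpose, hVz, vecMulVec_zero]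
  have hzz : 0 < z ⬝ᵥ z :=
    lt_of_le_of_ne' (Finset.sum_nonneg fun i _ => mul_self_nonneg (z i))
      (dotProduct_self_eq_zero.not.mpr hz)
  have h := hS _ htangent
  rw [transpose_vecMulVec, vecMulVec_mul_vecMulVec, vecMulVec_smul, Matrix.mul_smul, trace_smul,
    trace_mul_vecMulVec, smul_eq_mul] at h
  exact nonneg_of_mul_nonneg_right h hzz

theorem trace_mul_le_of_dual_certificate {ι n : Type*} [Fintype ι] [Fintype n]
    {𝒜 : Matrix n n ℝ →ₗ[ℝ] (ι → ℝ)} {𝒜ad : (ι → ℝ) →ₗ[ℝ] Matrix n n ℝ} {g : ι → ℝ}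
    (hadj : ∀ X : Matrix n n ℝ, X.IsSymm → ∑ i, 𝒜 X i * g i = trace (𝒜ad g * X))
    {C X Y : Matrix n n ℝ} (hS : ∀ u, 0 ≤ u ⬝ᵥ (C - 𝒜ad g) *ᵥ u)
    (hslack : trace ((C - 𝒜ad g) * Y) = 0) (hY : Y.IsSymm) (hX : X.PosSemidef)
    (hXY : 𝒜 X = 𝒜 Y) : trace (C * Y) ≤ trace (C * X) := by
  have hdual : trace (𝒜ad g * X) = trace (𝒜ad g * Y) := by
    rw [← hadj X (isHermitian_iff_isSymm.mp hX.isHermitian), ← hadj Y hY, hXY]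
  have hSX := trace_mul_nonneg_of_posSemidef hS hX
  rw [sub_mul, trace_sub] at hSX hslack
  linarith

theorem rank_deficient_second_order_points_are_optimal_general
    (n m p : ℕ)
    (𝒜 : Matrix (Fin n) (Fin n) ℝ →ₗ[ℝ] (Fin m → ℝ)) (b : Fin m → ℝ)
    (𝒜ad : (Fin m → ℝ) →ₗ[ℝ] Matrix (Fin n) (Fin n) ℝ)
    (hadj : ∀ (X : Matrix (Fin n) (Fin n) ℝ) (g : Fin m → ℝ), X.IsSymm →
      ∑ i, 𝒜 X i * g i = Matrix.trace (𝒜ad g * X))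
    (C : Matrix (Fin n) (Fin n) ℝ)
    (Vs : Matrix (Fin n) (Fin p) ℝ) (hVs : 𝒜 (Vs * Vsᵀ) = b)
    (hrank : Vs.rank < p)
    (hcrit : ∃ g : Fin m → ℝ,
      (C - 𝒜ad g) * Vs = 0 ∧
      ∀ Vd : Matrix (Fin n) (Fin p) ℝ, 𝒜 (Vd * Vsᵀ + Vs * Vdᵀ) = 0 →
        0 ≤ Matrix.trace ((C - 𝒜ad g) * (Vd * Vdᵀ))) :
    (∀ V' : Matrix (Fin n) (Fin p) ℝ, 𝒜 (V' * V'ᵀ) = b →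
      Matrix.trace (C * (Vs * Vsᵀ)) ≤ Matrix.trace (C * (V' * V'ᵀ))) ∧
    (∀ X : Matrix (Fin n) (Fin n) ℝ, 𝒜 X = b → X.PosSemidef →
      Matrix.trace (C * (Vs * Vsᵀ)) ≤ Matrix.trace (C * X)) := by
  obtain ⟨g, hslack, hsecond⟩ := hcrit
  obtain ⟨z, hz, hVsz⟩ := Vs.exists_mulVec_eq_zero_of_rank_lt (by simpa using hrank)
  have hS : ∀ u, 0 ≤ u ⬝ᵥ (C - 𝒜ad g) *ᵥ u := by
    refine dotProduct_mulVec_nonneg_of_trace_mul_self_nonneg hz hVsz fun W hW => hsecond W ?_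
    rw [← transpose_transpose Vs, ← transpose_mul, transpose_transpose, hW, transpose_zero,
      add_zero, map_zero]
  have hsdp : ∀ X : Matrix (Fin n) (Fin n) ℝ, 𝒜 X = b → X.PosSemidef →
      trace (C * (Vs * Vsᵀ)) ≤ trace (C * X) := fun X hX hXpsd =>
    trace_mul_le_of_dual_certificate (fun X => hadj X g) hS
      (by rw [← Matrix.mul_assoc, hslack, Matrix.zero_mul, trace_zero]) (transpose_mul _ _)
      hXpsd (hX.trans hVs.symm)
  exact ⟨fun V hV => hsdp _ hV (posSemidef_self_mul_conjTranspose V), hsdp⟩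

/-- a rank-deficient second-order critical point of the
factorized problem `f_C(V) = Tr(C V Vᵀ)` on `M_p` is a global minimizer of
`f_C` over `M_p`, and `V_* V_*ᵀ` moreover minimizes `Tr(C X)` over
`E_SDP = {X : 𝒜 X = b, X ⪰ 0}`. -/
theorem rank_deficient_second_order_points_are_optimal
    (n m p : ℕ)
    (𝒜 : Matrix (Fin n) (Fin n) ℝ →ₗ[ℝ] (Fin m → ℝ)) (b : Fin m → ℝ)
    (𝒜ad : (Fin m → ℝ) →ₗ[ℝ] Matrix (Fin n) (Fin n) ℝ)
    (had_symm : ∀ g, (𝒜ad g).IsSymm)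
    (hadj : ∀ (X : Matrix (Fin n) (Fin n) ℝ) (g : Fin m → ℝ), X.IsSymm →
      ∑ i, 𝒜 X i * g i = Matrix.trace (𝒜ad g * X))
    (hne : ∃ X : Matrix (Fin n) (Fin n) ℝ, 𝒜 X = b ∧ X.PosSemidef)
    (hcpt : IsCompact {X : Matrix (Fin n) (Fin n) ℝ | 𝒜 X = b ∧ X.PosSemidef})
    (hsubmersion : ∀ V : Matrix (Fin n) (Fin p) ℝ, 𝒜 (V * Vᵀ) = b →
      Function.Surjective fun Vd : Matrix (Fin n) (Fin p) ℝ => 𝒜 (Vd * Vᵀ + V * Vdᵀ))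
    (C : Matrix (Fin n) (Fin n) ℝ) (hC : C.IsSymm)
    (Vs : Matrix (Fin n) (Fin p) ℝ) (hVs : 𝒜 (Vs * Vsᵀ) = b)
    (hrank : Vs.rank < p)
    (hcrit : ∃ g : Fin m → ℝ,
      (C - 𝒜ad g) * Vs = 0 ∧
      ∀ Vd : Matrix (Fin n) (Fin p) ℝ, 𝒜 (Vd * Vsᵀ + Vs * Vdᵀ) = 0 →
        0 ≤ Matrix.trace ((C - 𝒜ad g) * (Vd * Vdᵀ))) :
    (∀ V' : Matrix (Fin n) (Fin p) ℝ, 𝒜 (V' * V'ᵀ) = b →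
      Matrix.trace (C * (Vs * Vsᵀ)) ≤ Matrix.trace (C * (V' * V'ᵀ))) ∧
    (∀ X : Matrix (Fin n) (Fin n) ℝ, 𝒜 X = b → X.PosSemidef →
      Matrix.trace (C * (Vs * Vsᵀ)) ≤ Matrix.trace (C * X)) :=
  rank_deficient_second_order_points_are_optimal_general n m p 𝒜 b 𝒜ad hadj C Vs hVs hrank hcrit
end

section
/- Let A : S_n(ℝ) → ℝ^m be linear, b ∈ ℝ^m, E_SDP = { X ∈ S_n(ℝ) : A(X) = b, X ⪰ 0 } nonempty and compact, M_p = { V ∈ ℝ^{n×p} : A(VV^T) = b }, and assume that for every V ∈ M_p the linear map V̇ ∈ ℝ^{n×p} ↦ A(V̇V^T + VV̇^T) ∈ ℝ^m is surjective. If p(p+1)/2 > m, then for Lebesgue-almost every C ∈ S_n(ℝ) there is no V_* ∈ M_p such that rank(V_*) = p and there exists g ∈ ℝ^m with (C − A^*(g))·V_* = 0. -/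
open Matrix MeasureTheory

theorem aux_null_range_of_lowdim {W E : Type*} [NormedAddCommGroup W] [NormedSpace ℝ W]
    [FiniteDimensional ℝ W] [NormedAddCommGroup E] [NormedSpace ℝ E] [FiniteDimensional ℝ E]
    [MeasurableSpace E] [BorelSpace E] (μ : Measure E) [μ.IsAddHaarMeasure]
    (h : Module.finrank ℝ W < Module.finrank ℝ E) (Φ : W → E) (hΦ : Differentiable ℝ Φ) :
    μ (Set.range Φ) = 0 := by
  classical
  let bW := Module.finBasis ℝ W
  let bE := Module.finBasis ℝ E
  let π : E →ₗ[ℝ] W :=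
    (bW.equivFun.symm.toLinearMap) ∘ₗ (LinearMap.funLeft ℝ ℝ (Fin.castLE h.le)) ∘ₗ
      bE.equivFun.toLinearMap
  have hπsurj : Function.Surjective π := by
    simp only [π, LinearMap.coe_comp, LinearEquiv.coe_coe]
    exact (bW.equivFun.symm.surjective).comp
      ((LinearMap.funLeft_surjective_of_injective ℝ ℝ _
        (Fin.castLE_injective h.le)).comp bE.equivFun.surjective)
  have hπnotinj : ¬ Function.Injective π := fun hinj =>
    absurd (LinearMap.finrank_le_finrank_of_injective hinj) (by omega)
  obtain ⟨x₀, hx₀mem, hx₀0⟩ : ∃ x₀ ∈ LinearMap.ker π, x₀ ≠ (0 : E) := by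
    rw [← Submodule.ne_bot_iff]
    intro hbot
    exact hπnotinj (LinearMap.ker_eq_bot.mp hbot)
  have hπx₀ : π x₀ = 0 := hx₀mem
  let πc : E →L[ℝ] W := π.toContinuousLinearMap
  have hπc : ∀ x, πc x = π x := fun _ => rfl
  have key : μ ((Φ ∘ πc) '' Set.univ) = 0 := by
    apply addHaar_image_eq_zero_of_det_fderivWithin_eq_zero μ
      (f' := fun x => (fderiv ℝ Φ (πc x)).comp πc)
    · intro x _
      exact (((hΦ (πc x)).hasFDerivAt).comp x πc.hasFDerivAt).hasFDerivWithinAt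
    · intro x _
      by_contra hdet
      have hinj := (LinearMap.equivOfDetNeZero _ hdet).injective
      have : ((fderiv ℝ Φ (πc x)).comp πc) x₀ = 0 := by
        simp [ContinuousLinearMap.comp_apply, hπc, hπx₀]
      have h0 : ((fderiv ℝ Φ (πc x)).comp πc) (0 : E) = 0 := by simp
      exact hx₀0 (hinj (by simpa [LinearEquiv.coe_ofIsUnitDet] using (this.trans h0.symm)))
  have hr : Set.range Φ = (Φ ∘ πc) '' Set.univ := by
    have hsurj' : Function.Surjective (πc : E → W) := hπsurj
    have h1 : Set.range (πc : E → W) = Set.univ := Set.range_eq_univ.mpr hsurj'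
    rw [Set.image_univ, Set.range_comp, h1, Set.image_univ]
  rw [hr]; exact key

lemma aux_two_c2 (k : ℕ) : 2 * Nat.choose (k + 1) 2 = k * (k + 1) := by
  rw [Nat.choose_two_right]
  simp only [Nat.add_sub_cancel]
  have h : 2 ∣ (k + 1) * k := by
    have := Nat.even_mul_succ_self k
    rw [mul_comm] at this
    exact this.two_dvd
  rw [Nat.mul_div_cancel' h, mul_comm]

lemma aux_arith {n p q r m : ℕ} (hpq : p + q = n) (hr : r ≤ q) (hm : m < p * (p + 1) / 2) :
    n * n - Nat.choose (n + 1) 2 + (m + ((n - r) * r + Nat.choose (r + 1) 2)) < n * n := by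
  obtain ⟨s, hs⟩ : ∃ s, r + s = q := ⟨q - r, by omega⟩
  obtain ⟨a, ha⟩ : ∃ a, Nat.choose (n + 1) 2 = a := ⟨_, rfl⟩
  obtain ⟨bb, hb⟩ : ∃ bb, Nat.choose (r + 1) 2 = bb := ⟨_, rfl⟩
  obtain ⟨cp, hcp⟩ : ∃ cp, Nat.choose (p + 1) 2 = cp := ⟨_, rfl⟩
  rw [ha, hb]
  have h2a : 2 * a = n * (n + 1) := ha ▸ aux_two_c2 n
  have h2b : 2 * bb = r * (r + 1) := hb ▸ aux_two_c2 r
  have h2cp : 2 * cp = p * (p + 1) := hcp ▸ aux_two_c2 p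
  have hmcp : m < cp := by
    have hdvd : 2 ∣ p * (p + 1) := (Nat.even_mul_succ_self p).two_dvd
    have : 2 * (p * (p + 1) / 2) = p * (p + 1) := Nat.mul_div_cancel' hdvd
    omega
  have hnr : n - r = p + s := by omega
  have hkey : 2 * cp + 2 * ((p + s) * r) + 2 * bb + (s * s + 2 * (p * s) + s) = 2 * a := by
    rw [h2a, h2b, h2cp, ← hpq, ← hs]
    ring
  obtain ⟨u, hu⟩ : ∃ u, (p + s) * r = u := ⟨_, rfl⟩
  rw [hnr, hu]
  rw [hu] at hkey
  have hX : cp + u + bb ≤ a := by omega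
  obtain ⟨nn, hnn⟩ : ∃ nn, n * n = nn := ⟨_, rfl⟩
  rw [hnn]
  have han : 2 * a ≤ 2 * nn := by
    rw [h2a, ← hnn]; nlinarith
  omega

lemma aux_card_le (t : ℕ) :
    Fintype.card {x : Fin t × Fin t // x.1 ≤ x.2} = Nat.choose (t + 1) 2 := by
  rw [← Fintype.card_congr (Sym2.sortEquiv (α := Fin t)), Sym2.card, Fintype.card_fin]

lemma aux_card_lt (t : ℕ) :
    Fintype.card {x : Fin t × Fin t // x.2 < x.1} = t * t - Nat.choose (t + 1) 2 := by
  classical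
  have h1 : Fintype.card {x : Fin t × Fin t // x.2 < x.1}
      = Fintype.card {x : Fin t × Fin t // ¬ (x.1 ≤ x.2)} :=
    Fintype.card_congr (Equiv.subtypeEquivRight fun x => (not_le (a := x.1) (b := x.2)).symm)
  rw [h1, Fintype.card_subtype_compl, aux_card_le, Fintype.card_prod, Fintype.card_fin]

lemma aux_rank_le {n p q : ℕ} (hpq : p + q = n) (S : Matrix (Fin n) (Fin n) ℝ)
    (V : Matrix (Fin n) (Fin p) ℝ) (hV : V.rank = p) (h0 : S * V = 0) : S.rank ≤ q := by
  have h1 : LinearMap.range V.mulVecLin ≤ LinearMap.ker S.mulVecLin := by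
    rintro _ ⟨x, rfl⟩
    rw [LinearMap.mem_ker, ← LinearMap.comp_apply, ← Matrix.mulVecLin_mul, h0]
    simp
  have h2 : p ≤ Module.finrank ℝ (LinearMap.ker S.mulVecLin) := by
    have := Submodule.finrank_mono h1
    rw [show Module.finrank ℝ (LinearMap.range V.mulVecLin) = V.rank from rfl, hV] at this
    exact this
  have h3 := LinearMap.finrank_range_add_finrank_ker S.mulVecLin
  rw [Module.finrank_fin_fun] at h3
  have h4 : S.rank = Module.finrank ℝ (LinearMap.range S.mulVecLin) := rfl
  omega

theorem aux_sym_decomp {n q : ℕ} (S : Matrix (Fin n) (Fin n) ℝ) (hS : S.IsSymm)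
    (hrk : S.rank ≤ q) :
    ∃ (r : ℕ) (ι : Fin r → Fin n) (Y : Matrix (Fin n) (Fin r) ℝ),
      r ≤ q ∧ Function.Injective ι ∧
      (∀ k j, Y (ι k) j = if k = j then (1:ℝ) else 0) ∧
      S = Y * S.submatrix ι ι * Yᵀ := by
  classical
  set W' := LinearMap.range S.mulVecLin with hW'
  set r := S.rank with hr
  have hfr : Module.finrank ℝ ↥W' = r := rfl
  have hrq : r ≤ q := hrk
  let bS : Module.Basis (Fin r) ℝ ↥W' := Module.finBasisOfFinrankEq ℝ ↥W' hfr
  let B : Matrix (Fin n) (Fin r) ℝ := Matrix.of fun i k => ((bS k : Fin n → ℝ) i)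
  have hBmulVec : ∀ x : Fin r → ℝ, B.mulVec x = ((∑ k, x k • bS k : ↥W') : Fin n → ℝ) := by
    intro x; funext i
    simp only [Matrix.mulVec, dotProduct, B, Matrix.of_apply]
    rw [Submodule.coe_sum]
    simp [Finset.sum_apply, mul_comm]
  have hBrange : LinearMap.range B.mulVecLin = W' := by
    apply le_antisymm
    · rintro _ ⟨x, rfl⟩
      rw [Matrix.mulVecLin_apply, hBmulVec]
      exact (∑ k, x k • bS k : ↥W').2
    · intro w hw
      refine ⟨fun k => bS.repr ⟨w, hw⟩ k, ?_⟩
      rw [Matrix.mulVecLin_apply, hBmulVec]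
      rw [bS.sum_repr ⟨w, hw⟩]
  have hrankB : B.rank = r := by rw [Matrix.rank, hBrange, hfr]
  have hBtrank : Bᵀ.rank = r := by rw [Matrix.rank_transpose]; exact hrankB
  have hBt_top : LinearMap.range Bᵀ.mulVecLin = ⊤ := by
    apply Submodule.eq_top_of_finrank_eq
    rw [← Matrix.rank, hBtrank, Module.finrank_fin_fun]
  have hspanrows : Submodule.span ℝ (Set.range fun i : Fin n => (B i : Fin r → ℝ)) = ⊤ := by
    have h1 := Matrix.range_mulVecLin Bᵀ
    change _ = Submodule.span ℝ (Set.range B) at h1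
    rw [show (Set.range fun i : Fin n => (B i : Fin r → ℝ)) = Set.range B from rfl, ← h1, hBt_top]
  obtain ⟨t, hts, hspan, hli⟩ := exists_linearIndependent ℝ (Set.range fun i : Fin n => (B i : Fin r → ℝ))
  have htfin : t.Finite := hli.setFinite
  letI := htfin.fintype
  let bt : Module.Basis t ℝ (Fin r → ℝ) := Module.Basis.mk hli (by
    rw [Subtype.range_coe, hspan, hspanrows])
  have hcardt : Fintype.card t = r := by
    rw [← Module.finrank_eq_card_basis bt, Module.finrank_fin_fun]
  let e : Fin r ≃ t := (Fintype.equivFinOfCardEq hcardt).symm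
  have hchoice : ∀ v : t, ∃ i : Fin n, (B i : Fin r → ℝ) = ↑v := fun v => hts v.2
  let c : t → Fin n := fun v => (hchoice v).choose
  have hc : ∀ v : t, (B (c v) : Fin r → ℝ) = ↑v := fun v => (hchoice v).choose_spec
  let ι : Fin r → Fin n := fun k => c (e k)
  have hBι : ∀ k, (B (ι k) : Fin r → ℝ) = ↑(e k) := fun k => hc (e k)
  have hιinj : Function.Injective ι := by
    intro k k' hkk'
    have : ((e k : Fin r → ℝ)) = ((e k' : Fin r → ℝ)) := by rw [← hBι, ← hBι, hkk']
    exact e.injective (Subtype.coe_injective this)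
  let Q : Matrix (Fin r) (Fin r) ℝ := B.submatrix ι id
  have hQunit : IsUnit Q := by
    rw [← Matrix.linearIndependent_rows_iff_isUnit]
    have : (fun k => Q k) = fun k => ((e k : Fin r → ℝ)) := by
      funext k; exact hBι k
    rw [show Q.row = fun k => ((e k : Fin r → ℝ)) from this]
    exact hli.comp e e.injective
  have hQdet : IsUnit Q.det := (Matrix.isUnit_iff_isUnit_det Q).mp hQunit
  let Y : Matrix (Fin n) (Fin r) ℝ := B * Q⁻¹
  have hpivot : ∀ k j, Y (ι k) j = if k = j then (1:ℝ) else 0 := by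
    intro k j
    have h1 : Y (ι k) j = (Q * Q⁻¹) k j := by
      simp [Y, Q, Matrix.mul_apply, Matrix.submatrix_apply]
    rw [h1, Matrix.mul_nonsing_inv _ hQdet, Matrix.one_apply]
  -- B = Y * Q
  have hBYQ : B = Y * Q := by
    rw [Matrix.mul_assoc, Matrix.nonsing_inv_mul _ hQdet, Matrix.mul_one]
  have hYW : W' ≤ LinearMap.range Y.mulVecLin := by
    rw [← hBrange]
    rintro _ ⟨x, rfl⟩
    refine ⟨Q.mulVec x, ?_⟩
    rw [Matrix.mulVecLin_apply, Matrix.mulVecLin_apply]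
    show Y *ᵥ (Q *ᵥ x) = B *ᵥ x
    rw [Matrix.mulVec_mulVec, ← hBYQ]
  -- columns of S lie in range Y
  have hcol : ∀ j, (fun i => S i j) ∈ LinearMap.range Y.mulVecLin := by
    intro j
    apply hYW
    refine ⟨Pi.single j 1, ?_⟩
    rw [Matrix.mulVecLin_apply]
    funext i
    simp [Matrix.mulVec_single]
  have hNexists : ∀ j, ∃ cj : Fin r → ℝ, Y.mulVec cj = fun i => S i j := by
    intro j; obtain ⟨cj, hcj⟩ := hcol j; exact ⟨cj, by rw [← Matrix.mulVecLin_apply]; exact hcj⟩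
  let N : Matrix (Fin r) (Fin n) ℝ := Matrix.of fun k j => (hNexists j).choose k
  have hYN : Y * N = S := by
    ext i j
    have := congrFun (hNexists j).choose_spec i
    simpa [Matrix.mul_apply, Matrix.mulVec, dotProduct, N] using this
  have hNS : S = Y * S.submatrix ι id := by
    have hN : N = S.submatrix ι id := by
      ext k j
      have : S (ι k) j = (Y * N) (ι k) j := by rw [hYN]
      rw [Matrix.mul_apply] at this
      simp only [hpivot] at this
      simpa [Finset.sum_ite_eq, Matrix.submatrix_apply, N] using this.symm
    rw [← hN, hYN]
  refine ⟨r, ι, Y, hrq, hιinj, hpivot, ?_⟩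
  -- transpose manipulation
  have hsub : S = S.submatrix id ι * Yᵀ := by
    conv_lhs => rw [← hS]
    conv_lhs => rw [hNS]
    rw [Matrix.transpose_mul, Matrix.transpose_submatrix, hS]
  have hsub2 : S.submatrix id ι = Y * S.submatrix ι ι := by
    calc S.submatrix id ι = (Y * S.submatrix ι id).submatrix id ι := by rw [← hNS]
    _ = Y * (S.submatrix ι id).submatrix id ι := by
        ext i k
        simp [Matrix.mul_apply, Matrix.submatrix_apply]
    _ = Y * S.submatrix ι ι := by rw [Matrix.submatrix_submatrix]; simp
  rw [hsub2] at hsub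
  exact hsub

abbrev ChartDom (n m r : ℕ) (ι : Fin r → Fin n) : Type :=
  ({x : Fin n × Fin n // x.2 < x.1} → ℝ) × (Fin m → ℝ) ×
    (({i : Fin n // i ∉ Finset.image ι Finset.univ} × Fin r) → ℝ) ×
    ({x : Fin r × Fin r // x.1 ≤ x.2} → ℝ)

noncomputable def chartY {n r : ℕ} (ι : Fin r → Fin n)
    (z : ({i : Fin n // i ∉ Finset.image ι Finset.univ} × Fin r) → ℝ) :
    Matrix (Fin n) (Fin r) ℝ :=
  Matrix.of fun i k => (if ι k = i then (1:ℝ) else 0) +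
    (if h : i ∉ Finset.image ι Finset.univ then z (⟨i, h⟩, k) else 0)

noncomputable def chartA {r : ℕ} (a : {x : Fin r × Fin r // x.1 ≤ x.2} → ℝ) :
    Matrix (Fin r) (Fin r) ℝ :=
  Matrix.of fun k l => if h : k ≤ l then a ⟨(k, l), h⟩ else a ⟨(l, k), le_of_not_ge h⟩

noncomputable def chartK {n : ℕ} (x : {x : Fin n × Fin n // x.2 < x.1} → ℝ) :
    Matrix (Fin n) (Fin n) ℝ :=
  Matrix.of fun i j =>
    if h : j < i then x ⟨(i, j), h⟩ else if h' : i < j then - x ⟨(j, i), h'⟩ else 0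

noncomputable def chartMap {n m r : ℕ} (𝒜ad : (Fin m → ℝ) →ₗ[ℝ] Matrix (Fin n) (Fin n) ℝ)
    (ι : Fin r → Fin n) (w : ChartDom n m r ι) : Fin n → Fin n → ℝ :=
  fun i j => chartK w.1 i j + (2⁻¹ : ℝ) * (𝒜ad w.2.1 i j +
      ∑ k : Fin r, ∑ l : Fin r,
        chartY ι w.2.2.1 i k * chartA w.2.2.2 k l * chartY ι w.2.2.1 j l)

lemma chartMap_differentiable {n m r : ℕ} (𝒜ad : (Fin m → ℝ) →ₗ[ℝ] Matrix (Fin n) (Fin n) ℝ)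
    (ι : Fin r → Fin n) : Differentiable ℝ (chartMap 𝒜ad ι) := by
  apply differentiable_pi.mpr; intro i; apply differentiable_pi.mpr; intro j
  have hw1 : ∀ c, Differentiable ℝ (fun w : ChartDom n m r ι => w.1 c) :=
    fun c => (differentiable_pi.mp differentiable_fst) c
  have hw21 : Differentiable ℝ (fun w : ChartDom n m r ι => w.2.1) :=
    differentiable_fst.comp differentiable_snd
  have hw221 : ∀ c, Differentiable ℝ (fun w : ChartDom n m r ι => w.2.2.1 c) :=
    fun c => (differentiable_pi.mp
      (differentiable_fst.comp (differentiable_snd.comp differentiable_snd))) c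
  have hw222 : ∀ c, Differentiable ℝ (fun w : ChartDom n m r ι => w.2.2.2 c) :=
    fun c => (differentiable_pi.mp
      (differentiable_snd.comp (differentiable_snd.comp differentiable_snd))) c
  have hK : Differentiable ℝ (fun w : ChartDom n m r ι => chartK w.1 i j) := by
    unfold chartK
    simp only [Matrix.of_apply]
    by_cases h : j < i
    · simp only [dif_pos h]; exact hw1 _
    · simp only [dif_neg h]
      by_cases h' : i < j
      · simp only [dif_pos h']; exact (hw1 _).neg
      · simp only [dif_neg h']; exact differentiable_const 0
  have hAd : Differentiable ℝ (fun w : ChartDom n m r ι => 𝒜ad w.2.1 i j) := by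
    let l : (Fin m → ℝ) →ₗ[ℝ] ℝ :=
      (LinearMap.proj j) ∘ₗ (LinearMap.proj i) ∘ₗ 𝒜ad
    have hl : Differentiable ℝ (fun v : Fin m → ℝ => l v) := by
      have := l.toContinuousLinearMap.differentiable
      rwa [LinearMap.coe_toContinuousLinearMap'] at this
    exact hl.comp hw21
  have hY : ∀ i' k, Differentiable ℝ (fun w : ChartDom n m r ι => chartY ι w.2.2.1 i' k) := by
    intro i' k
    unfold chartY
    simp only [Matrix.of_apply]
    by_cases h : i' ∉ Finset.image ι Finset.univ
    · simp only [dif_pos h]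
      exact (differentiable_const _).add (hw221 _)
    · simp only [dif_neg h]
      exact (differentiable_const _).add (differentiable_const 0)
  have hA : ∀ k l, Differentiable ℝ (fun w : ChartDom n m r ι => chartA w.2.2.2 k l) := by
    intro k l
    unfold chartA
    simp only [Matrix.of_apply]
    by_cases h : k ≤ l
    · simp only [dif_pos h]; exact hw222 _
    · simp only [dif_neg h]; exact hw222 _
  apply hK.add
  apply Differentiable.const_mul
  apply hAd.add
  apply Differentiable.fun_sum; intro k _
  apply Differentiable.fun_sum; intro l _
  exact ((hY i k).mul (hA k l)).mul (hY j l)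
lemma chart_cover {n m p q : ℕ} (hpq : p + q = n)
    (𝒜ad : (Fin m → ℝ) →ₗ[ℝ] Matrix (Fin n) (Fin n) ℝ) (had_symm : ∀ g, (𝒜ad g).IsSymm)
    (M : Fin n → Fin n → ℝ) (V : Matrix (Fin n) (Fin p) ℝ) (hrank : V.rank = p)
    (g : Fin m → ℝ) (hVg : (Matrix.of M + (Matrix.of M)ᵀ - 𝒜ad g) * V = 0) :
    ∃ (r : ℕ) (_ : r ≤ q) (ι : Fin r → Fin n) (_ : Function.Injective ι)
      (w : ChartDom n m r ι), chartMap 𝒜ad ι w = M := by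
  classical
  set S := Matrix.of M + (Matrix.of M)ᵀ - 𝒜ad g with hSdef
  have hSsymm : S.IsSymm := by
    unfold Matrix.IsSymm
    rw [hSdef, Matrix.transpose_sub, Matrix.transpose_add, Matrix.transpose_transpose,
      had_symm g, add_comm]
  have hSrank : S.rank ≤ q := aux_rank_le hpq S V hrank hVg
  obtain ⟨r, ι, Y, hrq, hinj, hpivot, hdecomp⟩ := aux_sym_decomp S hSsymm hSrank
  have hSapp : ∀ a b, S a b = S b a := by
    intro a b
    conv_lhs => rw [← hSsymm]
    rfl
  refine ⟨r, hrq, ι, hinj, ⟨fun c => (M c.1.1 c.1.2 - M c.1.2 c.1.1) / 2, g,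
    fun zc => Y zc.1.1 zc.2, fun c => S (ι c.1.1) (ι c.1.2)⟩, ?_⟩
  have hYeq : chartY ι (fun zc => Y zc.1.1 zc.2) = Y := by
    ext i k
    unfold chartY
    simp only [Matrix.of_apply]
    by_cases h : i ∉ Finset.image ι Finset.univ
    · have hne : ¬ (ι k = i) := fun he => h (Finset.mem_image.mpr ⟨k, Finset.mem_univ _, he⟩)
      rw [dif_pos h, if_neg hne, zero_add]
    · simp only [dif_neg h, add_zero]
      obtain ⟨k₀, -, hk₀⟩ := Finset.mem_image.mp (not_not.mp h)
      rw [← hk₀, hpivot k₀ k]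
      by_cases hk : k = k₀
      · subst hk; simp
      · rw [if_neg (fun he => hk (hinj he)), if_neg (fun he => hk ((he : k₀ = k)).symm)]
  have hAeq : chartA (fun c : {x : Fin r × Fin r // x.1 ≤ x.2} => S (ι c.1.1) (ι c.1.2))
      = S.submatrix ι ι := by
    ext k l
    unfold chartA
    simp only [Matrix.of_apply, Matrix.submatrix_apply]
    by_cases h : k ≤ l
    · simp [dif_pos h]
    · simp only [dif_neg h]
      exact hSapp (ι l) (ι k)
  have hquad : ∀ (B : Matrix (Fin r) (Fin r) ℝ) i j,
      (∑ k : Fin r, ∑ l : Fin r, Y i k * B k l * Y j l) = (Y * B * Yᵀ) i j := by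
    intro B i j
    calc (∑ k : Fin r, ∑ l : Fin r, Y i k * B k l * Y j l)
        = ∑ l : Fin r, ∑ k : Fin r, Y i k * B k l * Y j l := Finset.sum_comm
      _ = ∑ l : Fin r, (∑ k : Fin r, Y i k * B k l) * Y j l := by
          apply Finset.sum_congr rfl; intro l _; rw [Finset.sum_mul]
      _ = (Y * B * Yᵀ) i j := by
          simp [Matrix.mul_apply, Matrix.transpose_apply]
  funext i j
  unfold chartMap
  simp only []
  rw [hYeq, hAeq, hquad]
  have hSij : (Y * S.submatrix ι ι * Yᵀ) i j = S i j := by rw [← hdecomp]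
  rw [hSij]
  have hKij : chartK (fun c : {x : Fin n × Fin n // x.2 < x.1} =>
      (M c.1.1 c.1.2 - M c.1.2 c.1.1) / 2) i j = (M i j - M j i) / 2 := by
    unfold chartK
    simp only [Matrix.of_apply]
    by_cases h : j < i
    · simp [dif_pos h]
    · simp only [dif_neg h]
      by_cases h' : i < j
      · simp only [dif_pos h']; ring
      · simp only [dif_neg h']
        have hij : i = j := le_antisymm (not_lt.mp h) (not_lt.mp h')
        subst hij; ring
  rw [hKij]
  have hSv : S i j = M i j + M j i - 𝒜ad g i j := by
    rw [hSdef]; simp [Matrix.sub_apply, Matrix.add_apply, Matrix.transpose_apply]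
  rw [hSv]
  ring


/-- if `E_SDP` is nonempty and compact, the factorization map is
a submersion at every point of `M_p`, and `p(p+1)/2 > m`, then for
(Lebesgue-)almost every symmetric cost matrix `C = M + Mᵀ` there is no
full-rank first-order critical point of `f_C(V) = Tr(C V Vᵀ)` on `M_p`. -/
theorem no_full_rank_critical_points
    (n m p : ℕ)
    (𝒜 : Matrix (Fin n) (Fin n) ℝ →ₗ[ℝ] (Fin m → ℝ)) (b : Fin m → ℝ)
    (𝒜ad : (Fin m → ℝ) →ₗ[ℝ] Matrix (Fin n) (Fin n) ℝ)
    (had_symm : ∀ g, (𝒜ad g).IsSymm)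
    (hadj : ∀ (X : Matrix (Fin n) (Fin n) ℝ) (g : Fin m → ℝ), X.IsSymm →
      ∑ i, 𝒜 X i * g i = Matrix.trace (𝒜ad g * X))
    (hne : ∃ X : Matrix (Fin n) (Fin n) ℝ, 𝒜 X = b ∧ X.PosSemidef)
    (hcpt : IsCompact {X : Matrix (Fin n) (Fin n) ℝ | 𝒜 X = b ∧ X.PosSemidef})
    (hsubmersion : ∀ V : Matrix (Fin n) (Fin p) ℝ, 𝒜 (V * Vᵀ) = b →
      Function.Surjective fun Vd : Matrix (Fin n) (Fin p) ℝ => 𝒜 (Vd * Vᵀ + V * Vdᵀ))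
    (hpm : m < p * (p + 1) / 2) :
    ∀ᵐ M ∂(volume : Measure (Fin n → Fin n → ℝ)),
      ¬∃ V : Matrix (Fin n) (Fin p) ℝ,
        𝒜 (V * Vᵀ) = b ∧ V.rank = p ∧
        ∃ g : Fin m → ℝ, (Matrix.of M + (Matrix.of M)ᵀ - 𝒜ad g) * V = 0 := by
  classical
  by_cases hpn : p ≤ n
  swap
  · refine Filter.Eventually.of_forall fun M => ?_
    rintro ⟨V, -, hrank, -⟩
    have hle := V.rank_le_card_height
    rw [Fintype.card_fin] at hle
    omega
  obtain ⟨q, hpq⟩ : ∃ q, p + q = n := ⟨n - p, by omega⟩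
  have key : (volume : Measure (Fin n → Fin n → ℝ)) {M | ∃ V : Matrix (Fin n) (Fin p) ℝ,
      𝒜 (V * Vᵀ) = b ∧ V.rank = p ∧ ∃ g : Fin m → ℝ,
      (Matrix.of M + (Matrix.of M)ᵀ - 𝒜ad g) * V = 0} = 0 := by
    have hsub : {M : Fin n → Fin n → ℝ | ∃ V : Matrix (Fin n) (Fin p) ℝ,
        𝒜 (V * Vᵀ) = b ∧ V.rank = p ∧ ∃ g : Fin m → ℝ,
        (Matrix.of M + (Matrix.of M)ᵀ - 𝒜ad g) * V = 0} ⊆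
        ⋃ j : {j : Σ r : Fin (q + 1), Fin (r : ℕ) → Fin n // Function.Injective j.2},
          Set.range (chartMap 𝒜ad j.1.2) := by
      rintro M ⟨V, -, hrank, g, hVg⟩
      obtain ⟨r, hrq, ι, hinj, w, hw⟩ := chart_cover hpq 𝒜ad had_symm M V hrank g hVg
      exact Set.mem_iUnion.mpr ⟨⟨⟨⟨r, by omega⟩, ι⟩, hinj⟩, ⟨w, hw⟩⟩
    refine measure_mono_null hsub (measure_iUnion_null fun j => ?_)
    refine aux_null_range_of_lowdim volume ?_ _ (chartMap_differentiable 𝒜ad j.1.2)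
    have hE : Module.finrank ℝ (Fin n → Fin n → ℝ) = n * n := by
      rw [Module.finrank_pi_fintype]
      simp [Module.finrank_pi, Finset.sum_const, Finset.card_univ]
    have hcZ : Fintype.card {i : Fin n // i ∉ Finset.image j.1.2 Finset.univ}
        = n - (j.1.1 : ℕ) := by
      rw [Fintype.card_subtype_compl, Fintype.card_fin]
      congr 1
      rw [show Fintype.card {x : Fin n // x ∈ Finset.image j.1.2 Finset.univ}
          = (Finset.image j.1.2 Finset.univ).card from Fintype.card_coe _,
        Finset.card_image_of_injective _ j.2, Finset.card_univ, Fintype.card_fin]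
    have hW : Module.finrank ℝ (ChartDom n m (j.1.1 : ℕ) j.1.2)
        = (n * n - Nat.choose (n + 1) 2) +
          (m + ((n - (j.1.1 : ℕ)) * (j.1.1 : ℕ) + Nat.choose ((j.1.1 : ℕ) + 1) 2)) := by
      have hrfl : Module.finrank ℝ (ChartDom n m (j.1.1 : ℕ) j.1.2) =
          Module.finrank ℝ (({x : Fin n × Fin n // x.2 < x.1} → ℝ) × (Fin m → ℝ) ×
          (({i : Fin n // i ∉ Finset.image j.1.2 Finset.univ} × Fin (j.1.1 : ℕ)) → ℝ) ×
          ({x : Fin (j.1.1 : ℕ) × Fin (j.1.1 : ℕ) // x.1 ≤ x.2} → ℝ)) := rfl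
      rw [hrfl, Module.finrank_prod, Module.finrank_prod, Module.finrank_prod,
        Module.finrank_pi, Module.finrank_pi, Module.finrank_pi, Module.finrank_pi,
        aux_card_lt, aux_card_le, Fintype.card_fin, Fintype.card_prod, hcZ,
        Fintype.card_fin]
    rw [hE, hW]
    have hrq : (j.1.1 : ℕ) ≤ q := by omega
    exact aux_arith hpq hrq hpm
  rw [ae_iff]
  simpa only [not_not] using key
end

section
/- Let A : S_n(ℝ) → ℝ^m be linear, b ∈ ℝ^m, and E_{SDP,p} = { X ∈ S_n(ℝ) : A(X) = b, X ⪰ 0, rank(X) ≤ p }. Assume p(p+1)/2 > m. Then for every M ∈ E_{SDP,p} with rank(M) = p, there exist a nonzero H ∈ S_n(ℝ) with A(H) = 0 and Range(H) ⊆ Range(M), and an ε > 0, such that for every t ∈ [−ε, ε]: M + tH ⪰ 0, A(M + tH) = b, rank(M + tH) = p, and Range(M + tH) = Range(M). In particular, M lies in the interior of a segment contained in E_{SDP,p} along which the column space (hence the tangent space to E_{SDP,p}) is constant. -/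
open Matrix
open scoped ComplexOrder

/-!
Write `M = W Wᵀ` with `W` an `n × p` matrix of full column rank (eigenvectors of the nonzero
eigenvalues, scaled by the square roots of those eigenvalues). The map `S ↦ 𝒜 (W S Wᵀ)` on
symmetric `p × p` matrices goes from a space of dimension `p(p+1)/2 > m` to `ℝ^m`, so it kills
some symmetric `S ≠ 0`; take `H = W S Wᵀ`. Then `M + tH = W (1 + tS) Wᵀ`, and `1 + tS` stays
positive definite for small `|t|`, so `M + tH` is positive semidefinite with column space
exactly that of `W`, which is the column space of `M`.
-/

section OfSym2

variable {K ι : Type*} [Semiring K]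

def Matrix.ofSym2 : (Sym2 ι → K) →ₗ[K] Matrix ι ι K where
  toFun x := of fun i j => x s(i, j)
  map_add' _ _ := rfl
  map_smul' _ _ := rfl

theorem Matrix.isSymm_ofSym2 (x : Sym2 ι → K) : (ofSym2 x).IsSymm :=
  ext fun _ _ => congrArg x Sym2.eq_swap

theorem Matrix.ofSym2_injective :
    Function.Injective (ofSym2 : (Sym2 ι → K) → Matrix ι ι K) := by
  intro x y h
  funext q
  induction q using Sym2.ind with
  | _ i j => exact congrFun (congrFun h i) j

end OfSym2

theorem exists_isSymm_ne_zero_map_eq_zero {K V ι : Type*} [Field K] [Fintype ι] [AddCommGroup V]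
    [Module K V] [FiniteDimensional K V] (F : Matrix ι ι K →ₗ[K] V)
    (hdim : Module.finrank K V < Fintype.card ι * (Fintype.card ι + 1) / 2) :
    ∃ S : Matrix ι ι K, S ≠ 0 ∧ S.IsSymm ∧ F S = 0 := by
  have hsym : Module.finrank K (Sym2 ι → K) = Fintype.card ι * (Fintype.card ι + 1) / 2 := by
    rw [Module.finrank_fintype_fun_eq_card, Sym2.card, Nat.choose_two_right, Nat.mul_comm]
    rfl
  obtain ⟨x, hx, hx0⟩ := Submodule.exists_mem_ne_zero_of_ne_bot
    (LinearMap.ker_ne_bot_of_finrank_lt (f := F ∘ₗ ofSym2) (hsym ▸ hdim))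
  exact ⟨ofSym2 x, (map_ne_zero_iff _ ofSym2_injective).mpr hx0, isSymm_ofSym2 x, hx⟩

theorem Matrix.range_mulVecLin_mul_le {R l m n : Type*} [CommSemiring R] [Fintype l] [Fintype m]
    (A : Matrix n l R) (B : Matrix l m R) :
    LinearMap.range (A * B).mulVecLin ≤ LinearMap.range A.mulVecLin := by
  rw [mulVecLin_mul]
  exact LinearMap.range_comp_le_range _ _

theorem Matrix.IsSymm.mul_mul_transpose {R m n : Type*} [CommSemiring R] [Fintype m]
    {S : Matrix m m R} (hS : S.IsSymm) (W : Matrix n m R) : (W * S * Wᵀ).IsSymm := by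
  rw [IsSymm, transpose_mul, transpose_mul, transpose_transpose, hS.eq, Matrix.mul_assoc]

section Congruence

variable {R m n : Type*} [CommRing R] [Fintype m] [Fintype n] [DecidableEq m]
  {W : Matrix n m R} {L : Matrix m n R}

theorem Matrix.range_mulVecLin_mul_mul_transpose (hL : L * W = 1) {A : Matrix m m R}
    (hA : IsUnit A) :
    LinearMap.range (W * A * Wᵀ).mulVecLin = LinearMap.range W.mulVecLin := by
  refine le_antisymm (by rw [Matrix.mul_assoc]; exact range_mulVecLin_mul_le _ _) ?_
  have hright : W * A * Wᵀ * (Lᵀ * A⁻¹) = W := by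
    rw [Matrix.mul_assoc, ← Matrix.mul_assoc Wᵀ, ← transpose_mul, hL, transpose_one,
      Matrix.one_mul, mul_nonsing_inv_cancel_right _ _ ((isUnit_iff_isUnit_det _).mp hA)]
  conv_lhs => rw [← hright]
  exact range_mulVecLin_mul_le _ _

theorem Matrix.mul_mul_transpose_eq_zero_iff (hL : L * W = 1) {S : Matrix m m R} :
    W * S * Wᵀ = 0 ↔ S = 0 := by
  refine ⟨fun h => ?_, fun h => by rw [h, Matrix.mul_zero, Matrix.zero_mul]⟩
  calc S = L * (W * S * Wᵀ) * Lᵀ := by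
        rw [← Matrix.mul_assoc, ← Matrix.mul_assoc, hL, Matrix.one_mul, Matrix.mul_assoc,
          ← transpose_mul, hL, transpose_one, Matrix.mul_one]
    _ = 0 := by rw [h, Matrix.mul_zero, Matrix.zero_mul]

end Congruence

theorem Matrix.IsHermitian.exists_pos_forall_posDef_one_add_smul {𝕜 ι : Type*} [RCLike 𝕜]
    [Fintype ι] [DecidableEq ι] {S : Matrix ι ι 𝕜} (hS : S.IsHermitian) :
    ∃ ε > 0, ∀ t : ℝ, |t| ≤ ε → (1 + t • S).PosDef := by
  set C := 1 + ∑ i, |hS.eigenvalues i|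
  have hC : ∀ i, |hS.eigenvalues i| < C := fun i => by
    have := Finset.single_le_sum (fun j _ => abs_nonneg (hS.eigenvalues j)) (Finset.mem_univ i)
    linarith
  refine ⟨C⁻¹, by positivity, fun t ht => ?_⟩
  have hdiag : 1 + t • S = (hS.eigenvectorUnitary : Matrix ι ι 𝕜) *
      diagonal (fun i => ((1 + t * hS.eigenvalues i : ℝ) : 𝕜)) *
        star (hS.eigenvectorUnitary : Matrix ι ι 𝕜) := by
    have : diagonal (fun i => ((1 + t * hS.eigenvalues i : ℝ) : 𝕜))
        = 1 + t • diagonal (RCLike.ofReal ∘ hS.eigenvalues) := by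
      ext i j
      rcases eq_or_ne i j with rfl | hij
      · simp [RCLike.real_smul_eq_coe_mul]
      · simp [hij]
    conv_lhs => rw [hS.spectral_theorem, Unitary.conjStarAlgAut_apply]
    rw [this, Matrix.mul_add, Matrix.add_mul, Matrix.mul_one, ← Unitary.coe_star,
      Unitary.coe_mul_star_self, Matrix.mul_smul, Matrix.smul_mul]
  rw [hdiag, IsUnit.posDef_star_right_conjugate_iff Unitary.isUnit_coe, posDef_diagonal_iff]
  intro i
  have : |t * hS.eigenvalues i| < 1 := by
    rw [abs_mul]
    calc |t| * |hS.eigenvalues i| ≤ C⁻¹ * |hS.eigenvalues i| := by gcongr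
      _ < C⁻¹ * C := by gcongr; exact hC i
      _ = 1 := inv_mul_cancel₀ (by positivity)
  exact RCLike.ofReal_pos.mpr (by linarith [neg_abs_le (t * hS.eigenvalues i)])

namespace Matrix.PosSemidef

variable {n : Type*} [Fintype n] [DecidableEq n] {M : Matrix n n ℝ} (hM : M.PosSemidef)

noncomputable def rankFactor : Matrix n {i // hM.isHermitian.eigenvalues i ≠ 0} ℝ :=
  of fun i k => (hM.isHermitian.eigenvectorUnitary : Matrix n n ℝ) i k *
    √(hM.isHermitian.eigenvalues k)

theorem card_rankFactor_index :
    Fintype.card {i // hM.isHermitian.eigenvalues i ≠ 0} = M.rank :=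
  hM.isHermitian.rank_eq_card_non_zero_eigs.symm

theorem rankFactor_mul_transpose : hM.rankFactor * hM.rankFactorᵀ = M := by
  conv_rhs => rw [hM.isHermitian.spectral_theorem, Unitary.conjStarAlgAut_apply]
  ext i j
  rw [mul_apply, mul_apply]
  conv_rhs => rw [← Fintype.sum_subtype_add_sum_subtype (hM.isHermitian.eigenvalues · ≠ 0)]
  simp only [mul_diagonal, rankFactor, of_apply, transpose_apply, star_eq_conjTranspose,
    conjTranspose_apply, star_trivial, Function.comp_apply, RCLike.ofReal_real_eq_id, id]
  rw [Fintype.sum_eq_zero (α := {a // ¬hM.isHermitian.eigenvalues a ≠ 0}) _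
    fun a => by rw [not_not.mp a.2, mul_zero, zero_mul], add_zero]
  refine Finset.sum_congr rfl fun k _ => ?_
  rw [mul_mul_mul_comm, Real.mul_self_sqrt (hM.eigenvalues_nonneg k), mul_right_comm]

theorem exists_mul_rankFactor_eq_one :
    ∃ L : Matrix {i // hM.isHermitian.eigenvalues i ≠ 0} n ℝ, L * hM.rankFactor = 1 := by
  set V : Matrix n n ℝ := ↑hM.isHermitian.eigenvectorUnitary
  set d := hM.isHermitian.eigenvalues
  refine ⟨of fun k i => V i k / √(d k), ?_⟩
  ext k l
  have hV : Vᵀ * V = 1 := by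
    rw [← conjTranspose_eq_transpose_of_trivial, ← star_eq_conjTranspose,
      Unitary.coe_star_mul_self]
  have horth : ∑ i, V i k * V i l = (1 : Matrix n n ℝ) k l := by
    rw [← hV, mul_apply]
    rfl
  have hsqrt : √(d k) ≠ 0 := Real.sqrt_ne_zero'.mpr ((hM.eigenvalues_nonneg k).lt_of_ne' k.2)
  calc (of (fun k i => V i k / √(d k)) * hM.rankFactor) k l
      = (∑ i, V i k * V i l) * (√(d l) / √(d k)) := by
        simp only [mul_apply, of_apply, rankFactor, Finset.sum_mul]
        exact Finset.sum_congr rfl fun i _ => by ring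
    _ = (1 : Matrix _ _ ℝ) k l := by
        rcases eq_or_ne k l with rfl | h
        · rw [horth, one_apply_eq, one_apply_eq, one_mul, div_self hsqrt]
        · rw [horth, one_apply_ne (Subtype.coe_ne_coe.mpr h), one_apply_ne h, zero_mul]

end Matrix.PosSemidef

/-- if `p(p+1)/2 > m`, every rank-`p` element `M` of
`E_{SDP,p} = {X : 𝒜 X = b, X ⪰ 0, rank X ≤ p}` lies in the interior of a
segment `[M - εH, M + εH] ⊆ E_{SDP,p}` along which the column space is
constant. -/
theorem segment_with_constant_range
    (n m p : ℕ)
    (𝒜 : Matrix (Fin n) (Fin n) ℝ →ₗ[ℝ] (Fin m → ℝ)) (b : Fin m → ℝ)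
    (hpm : m < p * (p + 1) / 2)
    (M : Matrix (Fin n) (Fin n) ℝ) (hM : M.PosSemidef) (hMb : 𝒜 M = b)
    (hrank : M.rank = p) :
    ∃ H : Matrix (Fin n) (Fin n) ℝ, H ≠ 0 ∧ H.IsSymm ∧ 𝒜 H = 0 ∧
      LinearMap.range H.mulVecLin ≤ LinearMap.range M.mulVecLin ∧
      ∃ ε : ℝ, 0 < ε ∧ ∀ t : ℝ, |t| ≤ ε →
        (M + t • H).PosSemidef ∧ 𝒜 (M + t • H) = b ∧ (M + t • H).rank = p ∧
        LinearMap.range (M + t • H).mulVecLin = LinearMap.range M.mulVecLin := by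
  set W := hM.rankFactor
  obtain ⟨L, hL⟩ := hM.exists_mul_rankFactor_eq_one
  obtain ⟨S, hS0, hS, hS𝒜⟩ := exists_isSymm_ne_zero_map_eq_zero
    (𝒜 ∘ₗ mulRightLinearMap _ ℝ Wᵀ ∘ₗ mulLeftLinearMap _ ℝ W)
    (by rwa [Module.finrank_fin_fun, hM.card_rankFactor_index, hrank])
  replace hS𝒜 : 𝒜 (W * S * Wᵀ) = 0 := hS𝒜
  obtain ⟨ε, hε, hpos⟩ := IsHermitian.exists_pos_forall_posDef_one_add_smul
    (hS.eq ▸ conjTranspose_eq_transpose_of_trivial S)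
  have hrangeM : LinearMap.range M.mulVecLin = LinearMap.range W.mulVecLin := by
    simpa [W, hM.rankFactor_mul_transpose] using range_mulVecLin_mul_mul_transpose hL isUnit_one
  have hrangeH : LinearMap.range (W * S * Wᵀ).mulVecLin ≤ LinearMap.range M.mulVecLin := by
    rw [hrangeM, Matrix.mul_assoc]
    exact range_mulVecLin_mul_le _ _
  refine ⟨W * S * Wᵀ, (mul_mul_transpose_eq_zero_iff hL).not.mpr hS0, hS.mul_mul_transpose W,
    hS𝒜, hrangeH, ε, hε, fun t ht => ?_⟩
  have hMt : W * (1 + t • S) * Wᵀ = M + t • (W * S * Wᵀ) := by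
    rw [Matrix.mul_add, Matrix.add_mul, Matrix.mul_one, hM.rankFactor_mul_transpose,
      Matrix.mul_smul, Matrix.smul_mul]
  have hrange :
      LinearMap.range (M + t • (W * S * Wᵀ)).mulVecLin = LinearMap.range M.mulVecLin := by
    rw [← hMt, range_mulVecLin_mul_mul_transpose hL (hpos t ht).isUnit, hrangeM]
  refine ⟨?_, by rw [map_add, map_smul, hMb, hS𝒜, smul_zero, add_zero],
    by rw [← hrank]; exact congrArg (fun V : Submodule ℝ _ => Module.finrank ℝ V) hrange,
    hrange⟩
  rw [← hMt, ← conjTranspose_eq_transpose_of_trivial]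
  exact (hpos t ht).posSemidef.mul_mul_conjTranspose_same W
end

section
/- (SDP dual certificate.) Let A : S_n(ℝ) → ℝ^m be linear with adjoint A^*, b ∈ ℝ^m, C ∈ S_n(ℝ), and let X0 ∈ S_n(ℝ) satisfy A(X0) = b and X0 ⪰ 0, with r0 = rank(X0). Suppose there exist g1 ∈ ℝ^m and C1 ∈ S_n(ℝ) such that C = A^*(g1) + C1, C1·X0 = 0, C1 ⪰ 0, and rank(C1) = n − r0. Then X0 is a minimizer of Tr(CX) over E_SDP = { X ∈ S_n(ℝ) : A(X) = b, X ⪰ 0 }, and every minimizer X satisfies C1·X = 0, i.e. Range(X) ⊆ Range(X0). In particular, if the restriction of A to the subspace { X ∈ S_n(ℝ) : Range(X) ⊆ Range(X0) } is injective, then X0 is the unique minimizer. -/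
/-!
Weak duality: for feasible `X`, `Tr(C X) = ⟨b, g1⟩ + Tr(C1 X)`, and `Tr(C1 X) ≥ 0` since both
factors are positive semidefinite; at `X0` the second term vanishes, so `X0` is optimal. A
minimizer has `Tr(C1 X) = 0`, which for positive semidefinite matrices forces `C1 X = 0`. The
rank condition makes `ker C1` exactly `Range X0`, so `Range X ⊆ ker C1 = Range X0`, and
injectivity of `𝒜` on that subspace pins `X - X0` to zero.
-/

open Matrix

namespace Matrix

theorem range_mulVecLin_le_ker_of_mul_eq_zero {l m p R : Type*} [Fintype m] [Fintype p]
    [CommSemiring R] {A : Matrix l m R} {B : Matrix m p R} (h : A * B = 0) :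
    LinearMap.range B.mulVecLin ≤ LinearMap.ker A.mulVecLin :=
  LinearMap.range_le_ker_iff.mpr <| by rw [← mulVecLin_mul, h, mulVecLin_zero]

theorem range_mulVecLin_eq_ker_of_mul_eq_zero {l ι p K : Type*} [Fintype ι] [Fintype p] [Field K]
    {A : Matrix l ι K} {B : Matrix ι p K} (h : A * B = 0)
    (hrank : Fintype.card ι ≤ A.rank + B.rank) :
    LinearMap.range B.mulVecLin = LinearMap.ker A.mulVecLin := by
  refine Submodule.eq_of_le_of_finrank_le (range_mulVecLin_le_ker_of_mul_eq_zero h) ?_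
  have hnullity := LinearMap.finrank_range_add_finrank_ker A.mulVecLin
  rw [Module.finrank_fintype_fun_eq_card] at hnullity
  change A.rank + _ = _ at hnullity
  change _ ≤ B.rank
  omega

theorem PosSemidef.isSymm {ι R : Type*} [Ring R] [PartialOrder R] [StarRing R] [TrivialStar R]
    {A : Matrix ι ι R} (hA : A.PosSemidef) : A.IsSymm :=
  isHermitian_iff_isSymm.mp hA.isHermitian

section PosSemidef

open scoped MatrixOrder ComplexOrder

variable {ι 𝕜 : Type*} [Fintype ι] [RCLike 𝕜]

theorem trace_conjTranspose_mul_self_mul_conjTranspose_mul_self (A B : Matrix ι ι 𝕜) :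
    (Aᴴ * A * (Bᴴ * B)).trace = ((A * Bᴴ)ᴴ * (A * Bᴴ)).trace := by
  rw [conjTranspose_mul, conjTranspose_conjTranspose, ← Matrix.mul_assoc, trace_mul_cycle]
  simp only [Matrix.mul_assoc]

theorem PosSemidef.trace_mul_nonneg {P Q : Matrix ι ι 𝕜} (hP : P.PosSemidef)
    (hQ : Q.PosSemidef) : 0 ≤ (P * Q).trace := by
  classical
  obtain ⟨A, rfl⟩ := CStarAlgebra.nonneg_iff_eq_star_mul_self.mp hP.nonneg
  obtain ⟨B, rfl⟩ := CStarAlgebra.nonneg_iff_eq_star_mul_self.mp hQ.nonneg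
  rw [star_eq_conjTranspose, star_eq_conjTranspose,
    trace_conjTranspose_mul_self_mul_conjTranspose_mul_self]
  exact (posSemidef_conjTranspose_mul_self _).trace_nonneg

theorem PosSemidef.mul_eq_zero_of_trace_mul_eq_zero {P Q : Matrix ι ι 𝕜} (hP : P.PosSemidef)
    (hQ : Q.PosSemidef) (h : (P * Q).trace = 0) : P * Q = 0 := by
  classical
  obtain ⟨A, rfl⟩ := CStarAlgebra.nonneg_iff_eq_star_mul_self.mp hP.nonneg
  obtain ⟨B, rfl⟩ := CStarAlgebra.nonneg_iff_eq_star_mul_self.mp hQ.nonneg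
  rw [star_eq_conjTranspose, star_eq_conjTranspose,
    trace_conjTranspose_mul_self_mul_conjTranspose_mul_self,
    trace_conjTranspose_mul_self_eq_zero_iff] at h
  rw [star_eq_conjTranspose, star_eq_conjTranspose, Matrix.mul_assoc, ← Matrix.mul_assoc A,
    h, Matrix.zero_mul, Matrix.mul_zero]

end PosSemidef

end Matrix

theorem sdp_dual_certificate_general
    (n m : ℕ)
    (𝒜 : Matrix (Fin n) (Fin n) ℝ →ₗ[ℝ] (Fin m → ℝ)) (b : Fin m → ℝ)
    (𝒜ad : (Fin m → ℝ) →ₗ[ℝ] Matrix (Fin n) (Fin n) ℝ)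
    (hadj : ∀ (X : Matrix (Fin n) (Fin n) ℝ) (g : Fin m → ℝ), X.IsSymm →
      ∑ i, 𝒜 X i * g i = Matrix.trace (𝒜ad g * X))
    (C X0 : Matrix (Fin n) (Fin n) ℝ)
    (hX0feas : 𝒜 X0 = b) (hX0psd : X0.PosSemidef)
    (r0 : ℕ) (hr0 : X0.rank = r0)
    (g1 : Fin m → ℝ) (C1 : Matrix (Fin n) (Fin n) ℝ)
    (hC : C = 𝒜ad g1 + C1)
    (hC1X0 : C1 * X0 = 0) (hC1psd : C1.PosSemidef) (hC1rank : C1.rank = n - r0) :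
    (∀ X : Matrix (Fin n) (Fin n) ℝ, 𝒜 X = b → X.PosSemidef →
        Matrix.trace (C * X0) ≤ Matrix.trace (C * X)) ∧
    (∀ X : Matrix (Fin n) (Fin n) ℝ, 𝒜 X = b → X.PosSemidef →
        Matrix.trace (C * X) ≤ Matrix.trace (C * X0) →
        C1 * X = 0 ∧ LinearMap.range X.mulVecLin ≤ LinearMap.range X0.mulVecLin) ∧
    ((∀ X : Matrix (Fin n) (Fin n) ℝ, X.IsSymm →
        LinearMap.range X.mulVecLin ≤ LinearMap.range X0.mulVecLin → 𝒜 X = 0 → X = 0) →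
      ∀ X : Matrix (Fin n) (Fin n) ℝ, 𝒜 X = b → X.PosSemidef →
        Matrix.trace (C * X) ≤ Matrix.trace (C * X0) → X = X0) := by
  have hvalue : ∀ X, 𝒜 X = b → X.PosSemidef →
      (C * X).trace = ∑ i, b i * g1 i + (C1 * X).trace := fun X hX hXpsd => by
    rw [hC, Matrix.add_mul, trace_add, ← hadj X g1 hXpsd.isSymm, hX]
  have hvalue0 : (C * X0).trace = ∑ i, b i * g1 i := by
    rw [hvalue X0 hX0feas hX0psd, hC1X0, trace_zero, add_zero]
  have hkerC1 : LinearMap.range X0.mulVecLin = LinearMap.ker C1.mulVecLin :=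
    range_mulVecLin_eq_ker_of_mul_eq_zero hC1X0 <| by
      rw [Fintype.card_fin]
      have := X0.rank_le_width
      omega
  have hminimizer : ∀ X, 𝒜 X = b → X.PosSemidef → (C * X).trace ≤ (C * X0).trace →
      C1 * X = 0 ∧ LinearMap.range X.mulVecLin ≤ LinearMap.range X0.mulVecLin := by
    intro X hX hXpsd hle
    have hC1X : C1 * X = 0 := hC1psd.mul_eq_zero_of_trace_mul_eq_zero hXpsd <|
      le_antisymm (by linarith [hvalue X hX hXpsd]) (hC1psd.trace_mul_nonneg hXpsd)
    exact ⟨hC1X, hkerC1 ▸ range_mulVecLin_le_ker_of_mul_eq_zero hC1X⟩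
  refine ⟨fun X hX hXpsd => ?_, hminimizer, fun hinj X hX hXpsd hle => ?_⟩
  · linarith [hvalue X hX hXpsd, hC1psd.trace_mul_nonneg hXpsd]
  · have hrange : LinearMap.range (X - X0).mulVecLin ≤ LinearMap.range X0.mulVecLin := by
      rintro _ ⟨v, rfl⟩
      rw [mulVecLin_apply, sub_mulVec]
      exact sub_mem ((hminimizer X hX hXpsd hle).2 ⟨v, rfl⟩) ⟨v, rfl⟩
    refine sub_eq_zero.mp (hinj _ ?_ hrange (by rw [map_sub, hX, hX0feas, sub_self]))
    exact hXpsd.isSymm.sub hX0psd.isSymm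

/-- SDP dual certificate.  If `C = A^*(g1) + C1` with
`C1 X0 = 0`, `C1 ⪰ 0` and `rank C1 = n - r0`, then `X0` minimizes `Tr(C X)`
over `E_SDP`, every minimizer `X` satisfies `C1 X = 0`, i.e. has range
contained in the range of `X0`, and if `A` is injective on the symmetric
matrices with range contained in `Range X0`, then `X0` is the unique
minimizer. -/
theorem sdp_dual_certificate
    (n m : ℕ)
    (𝒜 : Matrix (Fin n) (Fin n) ℝ →ₗ[ℝ] (Fin m → ℝ)) (b : Fin m → ℝ)
    (𝒜ad : (Fin m → ℝ) →ₗ[ℝ] Matrix (Fin n) (Fin n) ℝ)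
    (had_symm : ∀ g, (𝒜ad g).IsSymm)
    (hadj : ∀ (X : Matrix (Fin n) (Fin n) ℝ) (g : Fin m → ℝ), X.IsSymm →
      ∑ i, 𝒜 X i * g i = Matrix.trace (𝒜ad g * X))
    (C X0 : Matrix (Fin n) (Fin n) ℝ)
    (hX0feas : 𝒜 X0 = b) (hX0psd : X0.PosSemidef)
    (r0 : ℕ) (hr0 : X0.rank = r0)
    (g1 : Fin m → ℝ) (C1 : Matrix (Fin n) (Fin n) ℝ)
    (hC : C = 𝒜ad g1 + C1)
    (hC1X0 : C1 * X0 = 0) (hC1psd : C1.PosSemidef) (hC1rank : C1.rank = n - r0) :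
    (∀ X : Matrix (Fin n) (Fin n) ℝ, 𝒜 X = b → X.PosSemidef →
        Matrix.trace (C * X0) ≤ Matrix.trace (C * X)) ∧
    (∀ X : Matrix (Fin n) (Fin n) ℝ, 𝒜 X = b → X.PosSemidef →
        Matrix.trace (C * X) ≤ Matrix.trace (C * X0) →
        C1 * X = 0 ∧ LinearMap.range X.mulVecLin ≤ LinearMap.range X0.mulVecLin) ∧
    ((∀ X : Matrix (Fin n) (Fin n) ℝ, X.IsSymm →
        LinearMap.range X.mulVecLin ≤ LinearMap.range X0.mulVecLin → 𝒜 X = 0 → X = 0) →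
      ∀ X : Matrix (Fin n) (Fin n) ℝ, 𝒜 X = b → X.PosSemidef →
        Matrix.trace (C * X) ≤ Matrix.trace (C * X0) → X = X0) :=
  sdp_dual_certificate_general n m 𝒜 b 𝒜ad hadj C X0 hX0feas hX0psd r0 hr0 g1 C1 hC hC1X0 hC1psd
    hC1rank
end
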